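/- arXiv:2406.17674 — 8 statements merged into one kernel-verified Lean document; each statement's English description precedes it below -/
import Mathlib

section
/- Let (X,d) be a metric space, A ⊆ X nonempty closed, p ∈ [1,∞). For y ∈ X define ψ_y : X → ℝ ∪ {−∞} by ψ_y(z) = −∞ if z ∉ A ∪ {y}, ψ_y(y) = 0 (when y ∉ A), and ψ_y(z) = −dist(y,A)^p for z ∈ A. Then for all x ∈ X, inf_{z∈X} (d(x,z)^p − ψ_y(z)) = min{d(x,y)^p, dist(x,A)^p + dist(y,A)^p}. In particular, the function x ↦ c̃(x,y) is c-concave for the cost c(x,y) = d(x,y)^p. -/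
open Metric Set

open Classical in
noncomputable def psiAux {X : Type*} [MetricSpace X] (A : Set X) (p : ℝ) (y : X) :
    X → EReal := fun z =>
  if z ∈ A then ((-(infDist y A ^ p) : ℝ) : EReal)
  else if z = y then ((0 : ℝ) : EReal)
  else ⊥

open scoped Topology

/-! The infimum is taken over three kinds of points: `z = y` contributes `d(x,y)^p`, points
`z ∈ A` contribute `d(x,z)^p + dist(y,A)^p`, whose infimum is `dist(x,A)^p + dist(y,A)^p` because
`t ↦ t^p` is monotone and continuous on `[0, ∞)`, and all other points contribute `+∞`. -/

section

variable {X : Type*} [MetricSpace X] {A : Set X} {p : ℝ}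

lemma exists_mem_rpow_dist_lt (hne : A.Nonempty) (hp : 0 ≤ p) (x : X) {w : ℝ}
    (hw : infDist x A ^ p < w) : ∃ a ∈ A, dist x a ^ p < w := by
  have hnear : ∀ᶠ t in 𝓝[>] infDist x A, t ^ p < w :=
    nhdsWithin_le_nhds <|
      (Real.continuousAt_rpow_const _ _ (Or.inr hp)).eventually_lt_const hw
  obtain ⟨r, hrp, hr⟩ := (hnear.and self_mem_nhdsWithin).exists
  obtain ⟨a, haA, hxa⟩ := (infDist_lt_iff hne).mp hr
  exact ⟨a, haA, (Real.rpow_le_rpow dist_nonneg hxa.le hp).trans_lt hrp⟩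

lemma coe_rpow_dist_sub_psiAux_of_mem (x : X) {y z : X} (hz : z ∈ A) :
    ((dist x z ^ p : ℝ) : EReal) - psiAux A p y z =
      ((dist x z ^ p + infDist y A ^ p : ℝ) : EReal) := by
  rw [psiAux, if_pos hz, ← EReal.coe_sub, sub_neg_eq_add]

lemma coe_rpow_dist_sub_psiAux_self (hp : p ≠ 0) (x y : X) :
    ((dist x y ^ p : ℝ) : EReal) - psiAux A p y y = ((dist x y ^ p : ℝ) : EReal) := by
  by_cases hyA : y ∈ A
  · rw [coe_rpow_dist_sub_psiAux_of_mem x hyA, infDist_zero_of_mem hyA, Real.zero_rpow hp,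
      add_zero]
  · rw [psiAux, if_neg hyA, if_pos rfl, ← EReal.coe_sub, sub_zero]

lemma coe_rpow_dist_sub_psiAux_of_notMem (x : X) {y z : X} (hzA : z ∉ A) (hzy : z ≠ y) :
    ((dist x z ^ p : ℝ) : EReal) - psiAux A p y z = ⊤ := by
  rw [psiAux, if_neg hzA, if_neg hzy, EReal.coe_sub_bot]

theorem iInf_coe_rpow_dist_sub_psiAux (hne : A.Nonempty) (hp : 0 < p) (x y : X) :
    ⨅ z : X, (((dist x z ^ p : ℝ) : EReal) - psiAux A p y z) =
      ((min (dist x y ^ p) (infDist x A ^ p + infDist y A ^ p) : ℝ) : EReal) := by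
  apply le_antisymm
  · rw [EReal.coe_strictMono.monotone.map_min]
    refine le_min ?_ ?_
    · exact coe_rpow_dist_sub_psiAux_self hp.ne' x y ▸ iInf_le _ y
    · refine EReal.le_of_forall_lt_iff_le.mp fun w hw => ?_
      obtain ⟨a, haA, hxa⟩ := exists_mem_rpow_dist_lt hne hp.le x
        (w := w - infDist y A ^ p) (by linarith [EReal.coe_lt_coe_iff.mp hw])
      calc ⨅ z : X, (((dist x z ^ p : ℝ) : EReal) - psiAux A p y z)
          ≤ ((dist x a ^ p + infDist y A ^ p : ℝ) : EReal) :=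
            coe_rpow_dist_sub_psiAux_of_mem x haA ▸ iInf_le _ a
        _ ≤ w := EReal.coe_le_coe_iff.mpr (by linarith)
  · refine le_iInf fun z => ?_
    by_cases hzA : z ∈ A
    · rw [coe_rpow_dist_sub_psiAux_of_mem x hzA, EReal.coe_le_coe_iff]
      have := Real.rpow_le_rpow infDist_nonneg (infDist_le_dist_of_mem hzA (x := x)) hp.le
      exact (min_le_right _ _).trans (by linarith)
    by_cases hzy : z = y
    · rw [hzy, coe_rpow_dist_sub_psiAux_self hp.ne', EReal.coe_le_coe_iff]
      exact min_le_left _ _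
    · rw [coe_rpow_dist_sub_psiAux_of_notMem x hzA hzy]
      exact le_top

end

theorem ctilde_is_c_concave_general
    {X : Type*} [MetricSpace X] (A : Set X) (hne : A.Nonempty)
    (p : ℝ) (hp : 1 ≤ p) (y : X) :
    (∀ x : X,
      (⨅ z : X, (((dist x z ^ p : ℝ) : EReal) - psiAux A p y z)) =
        ((min (dist x y ^ p) (infDist x A ^ p + infDist y A ^ p) : ℝ) : EReal)) ∧
    (∃ ψ : X → EReal, ∀ x : X,
      ((min (dist x y ^ p) (infDist x A ^ p + infDist y A ^ p) : ℝ) : EReal) =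
        ⨅ z : X, (((dist x z ^ p : ℝ) : EReal) - ψ z)) := by
  have key := fun x => iInf_coe_rpow_dist_sub_psiAux hne (zero_lt_one.trans_le hp) x y
  exact ⟨key, psiAux A p y, fun x => (key x).symm⟩

theorem ctilde_is_c_concave
    {X : Type*} [MetricSpace X] (A : Set X) (hA : IsClosed A) (hne : A.Nonempty)
    (p : ℝ) (hp : 1 ≤ p) (y : X) :
    (∀ x : X,
      (⨅ z : X, (((dist x z ^ p : ℝ) : EReal) - psiAux A p y z)) =
        ((min (dist x y ^ p) (infDist x A ^ p + infDist y A ^ p) : ℝ) : EReal)) ∧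
    (∃ ψ : X → EReal, ∀ x : X,
      ((min (dist x y ^ p) (infDist x A ^ p + infDist y A ^ p) : ℝ) : EReal) =
        ⨅ z : X, (((dist x z ^ p : ℝ) : EReal) - ψ z)) :=
  ctilde_is_c_concave_general A hne p hp y
end

section
/- Let (X,A) be a metric pair with X complete separable proper, Ω = X \ A, p ∈ [1,∞), and μ, ν ∈ M_p(X,A). If γ ∈ Adm(μ,ν) satisfies ∫_{E_Ω} d(x,y)^p dγ = 0, then μ = ν. Conversely, if μ = ν there exists γ ∈ Adm(μ,ν) with zero cost, namely γ = (id,id)_# μ. Hence Wb_p(μ,ν) = 0 if and only if μ = ν, given existence of optimal plans. -/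
open MeasureTheory Metric Set ENNReal Filter

noncomputable def ptCost {X : Type*} [PseudoMetricSpace X] [MeasurableSpace X]
    (p : ℝ) (γ : Measure (X × X)) : ℝ≥0∞ :=
  ∫⁻ z, ENNReal.ofReal (dist z.1 z.2 ^ p) ∂γ

def ptAdm {X : Type*} [MeasurableSpace X] (A : Set X) (μ ν : Measure X) :
    Set (Measure (X × X)) :=
  {γ | γ (A ×ˢ A) = 0 ∧ (γ.map Prod.fst).restrict Aᶜ = μ ∧ (γ.map Prod.snd).restrict Aᶜ = ν}

noncomputable def WbPow {X : Type*} [PseudoMetricSpace X] [MeasurableSpace X]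
    (p : ℝ) (A : Set X) (μ ν : Measure X) : ℝ≥0∞ :=
  ⨅ γ ∈ ptAdm A μ ν, ptCost p γ

noncomputable def Wb {X : Type*} [PseudoMetricSpace X] [MeasurableSpace X]
    (p : ℝ) (A : Set X) (μ ν : Measure X) : ℝ≥0∞ :=
  WbPow p A μ ν ^ (1 / p)

def MemMp {X : Type*} [PseudoMetricSpace X] [MeasurableSpace X] (p : ℝ) (A : Set X)
    (μ : Measure X) : Prop :=
  μ A = 0 ∧ IsLocallyFiniteMeasure μ ∧
    ∫⁻ x, ENNReal.ofReal (Metric.infDist x A ^ p) ∂μ ≠ ⊤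

/-! Since `p ≠ 0`, the cost density `d(x, y) ^ p` vanishes exactly on the diagonal. A plan of zero
cost is therefore concentrated on the diagonal, so its two marginals coincide, and so do their
restrictions `μ` and `ν` to `Aᶜ`. Conversely, a measure not charging `A` is transported to itself at
zero cost by the diagonal plan `(id, id)_# μ`. -/

section Transport

variable {X : Type*} [MeasurableSpace X]

lemma map_diag_mem_ptAdm {A : Set X} {μ : Measure X} (hμA : μ A = 0) :
    μ.map (fun x => (x, x)) ∈ ptAdm A μ μ := by
  have hdiag : Measurable fun x : X => (x, x) := measurable_id'.prodMk measurable_id'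
  have hμ : μ.restrict Aᶜ = μ :=
    Measure.restrict_eq_self_of_ae_mem (measure_eq_zero_iff_ae_notMem.mp hμA)
  refine ⟨?_, ?_, ?_⟩
  · -- `A` need not be measurable, but `A ×ˢ A` lies in a measurable null set.
    refine measure_mono_null (t := Prod.fst ⁻¹' toMeasurable μ A)
      (fun z hz => subset_toMeasurable μ A hz.1) ?_
    rw [Measure.map_apply hdiag ((measurableSet_toMeasurable μ A).preimage measurable_fst)]
    exact (measure_toMeasurable A).trans hμA
  · rw [← Measure.fst, Measure.fst_map_prodMk measurable_id', Measure.map_id', hμ]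
  · rw [← Measure.snd, Measure.snd_map_prodMk measurable_id', Measure.map_id', hμ]

end Transport

section Cost

variable {X : Type*} [PseudoMetricSpace X] [SecondCountableTopology X] [MeasurableSpace X]
  [BorelSpace X]

lemma measurable_ofReal_dist_rpow (p : ℝ) :
    Measurable fun z : X × X => ENNReal.ofReal (dist z.1 z.2 ^ p) :=
  (measurable_dist.pow_const p).ennreal_ofReal

lemma ptCost_map_diag {p : ℝ} (hp : p ≠ 0) (μ : Measure X) :
    ptCost p (μ.map fun x => (x, x)) = 0 := by
  rw [ptCost, lintegral_map (measurable_ofReal_dist_rpow p) (measurable_id'.prodMk measurable_id')]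
  simp [Real.zero_rpow hp]

lemma ae_dist_eq_zero_of_ptCost_eq_zero {p : ℝ} (hp : p ≠ 0)
    {γ : Measure (X × X)} (h : ptCost p γ = 0) : ∀ᵐ z ∂γ, dist z.1 z.2 = 0 := by
  filter_upwards [(lintegral_eq_zero_iff (measurable_ofReal_dist_rpow p)).mp h] with z hz
  have hz' : dist z.1 z.2 ^ p = 0 :=
    le_antisymm (ENNReal.ofReal_eq_zero.mp hz) (Real.rpow_nonneg dist_nonneg p)
  exact (Real.rpow_eq_zero dist_nonneg hp).mp hz'

end Cost

section Metric

variable {X : Type*} [MetricSpace X] [SecondCountableTopology X] [MeasurableSpace X] [BorelSpace X]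
  {p : ℝ} {A : Set X} {μ ν : Measure X}

lemma eq_of_ptCost_eq_zero (hp : p ≠ 0) {γ : Measure (X × X)} (hγ : γ ∈ ptAdm A μ ν)
    (h : ptCost p γ = 0) : μ = ν := by
  have hdiag : (Prod.fst : X × X → X) =ᵐ[γ] Prod.snd := by
    filter_upwards [ae_dist_eq_zero_of_ptCost_eq_zero hp h] with z hz
    exact dist_eq_zero.mp hz
  rw [← hγ.2.1, ← hγ.2.2, Measure.map_congr hdiag]

lemma wbPow_self_eq_zero (hp : p ≠ 0) (hμA : μ A = 0) : WbPow p A μ μ = 0 :=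
  nonpos_iff_eq_zero.mp ((iInf₂_le _ (map_diag_mem_ptAdm hμA)).trans_eq (ptCost_map_diag hp μ))

end Metric

theorem wb_eq_zero_iff_eq_general
    {X : Type*} [MetricSpace X] [TopologicalSpace.SeparableSpace X]
    [MeasurableSpace X] [BorelSpace X]
    (A : Set X)
    (p : ℝ) (hp : 1 ≤ p)
    (μ ν : Measure X) (hμ : MemMp p A μ) :
    (∀ γ ∈ ptAdm A μ ν, ptCost p γ = 0 → μ = ν) ∧
    (μ = ν → μ.map (fun x => (x, x)) ∈ ptAdm A μ ν ∧
      ptCost p (μ.map (fun x => (x, x))) = 0) ∧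
    ((∃ γ ∈ ptAdm A μ ν, ptCost p γ = WbPow p A μ ν) →
      (WbPow p A μ ν = 0 ↔ μ = ν)) := by
  have hp0 : p ≠ 0 := (zero_lt_one.trans_le hp).ne'
  refine ⟨fun γ hγ => eq_of_ptCost_eq_zero hp0 hγ, ?_, fun ⟨γ, hγ, hopt⟩ => ⟨?_, ?_⟩⟩
  · rintro rfl
    exact ⟨map_diag_mem_ptAdm hμ.1, ptCost_map_diag hp0 μ⟩
  · exact fun h => eq_of_ptCost_eq_zero hp0 hγ (hopt.trans h)
  · rintro rfl
    exact wbPow_self_eq_zero hp0 hμ.1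

theorem wb_eq_zero_iff_eq
    {X : Type*} [MetricSpace X] [CompleteSpace X] [TopologicalSpace.SeparableSpace X]
    [ProperSpace X] [MeasurableSpace X] [BorelSpace X]
    (A : Set X) (hA : IsClosed A) (hne : A.Nonempty)
    (p : ℝ) (hp : 1 ≤ p)
    (μ ν : Measure X) (hμ : MemMp p A μ) (hν : MemMp p A ν) :
    (∀ γ ∈ ptAdm A μ ν, ptCost p γ = 0 → μ = ν) ∧
    (μ = ν → μ.map (fun x => (x, x)) ∈ ptAdm A μ ν ∧
      ptCost p (μ.map (fun x => (x, x))) = 0) ∧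
    ((∃ γ ∈ ptAdm A μ ν, ptCost p γ = WbPow p A μ ν) →
      (WbPow p A μ ν = 0 ↔ μ = ν)) :=
  wb_eq_zero_iff_eq_general A p hp μ ν hμ
end

section
/- Let (X,A) be a metric pair with X complete separable proper, Ω = X \ A, and let μ¹, μ², μ³ ∈ M_p(X,A), γ¹² ∈ Adm(μ¹,μ²), γ²³ ∈ Adm(μ²,μ³). Then there exists a Borel measure γ¹²³ on X × X × X such that π¹²_# γ¹²³ = γ¹² + σ¹² and π²³_# γ¹²³ = γ²³ + σ²³, where σ¹² and σ²³ are Borel measures supported on the diagonal Δ(A×A) = {(a,a) : a ∈ A}. -/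
open MeasureTheory Metric Set ENNReal Filter

/-! Off `A`, the two plans have the same middle marginal `μ₂`, and `μ₂` is σ-finite. On each
piece of finite `μ₂`-mass the plans are glued in the classical way: disintegrate both along the
middle coordinate and couple the two conditional laws independently. Mass of `γ₁₂` whose second
point lies in `A` is lifted by repeating that point, `(x, a) ↦ (x, a, a)`, and mass of `γ₂₃`
whose first point lies in `A` by `(a, y) ↦ (a, a, y)`. The extra marginals created this way
are the diagonal measures `σ₁₂` and `σ₂₃`. -/

open ProbabilityTheory

namespace MeasureTheory.Measure

variable {α β γ : Type*} [MeasurableSpace α] [MeasurableSpace β] [MeasurableSpace γ]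

lemma sum_restrict_preimage_disjointed_spanningSets (ρ : Measure α) {f : α → β}
    (hf : Measurable f) (ν : Measure β) [SigmaFinite ν] :
    sum (fun n ↦ ρ.restrict (f ⁻¹' disjointed (spanningSets ν) n)) = ρ := by
  rw [← restrict_iUnion ((disjoint_disjointed _).mono fun _ _ h ↦ h.preimage f)
      fun n ↦ (MeasurableSet.disjointed (measurableSet_spanningSets ν) n).preimage hf,
    ← preimage_iUnion, iUnion_disjointed, iUnion_spanningSets, preimage_univ, restrict_univ]

theorem exists_glue_of_isFiniteMeasure [StandardBorelSpace α] [Nonempty α]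
    [StandardBorelSpace γ] [Nonempty γ] (ρ₁ : Measure (α × β)) (ρ₂ : Measure (β × γ))
    [IsFiniteMeasure ρ₁] [IsFiniteMeasure ρ₂] (h : ρ₁.snd = ρ₂.fst) :
    ∃ η : Measure (α × β × γ),
      η.map (fun z ↦ (z.1, z.2.1)) = ρ₁ ∧ η.map (fun z ↦ (z.2.1, z.2.2)) = ρ₂ := by
  set κ₁ := (ρ₁.map Prod.swap).condKernel
  set κ₂ := ρ₂.condKernel
  have hκ₁ : ρ₂.fst ⊗ₘ κ₁ = ρ₁.map Prod.swap := by
    rw [← h, ← fst_map_swap]; exact disintegrate _ _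
  refine ⟨(ρ₂.fst ⊗ₘ (κ₁ ×ₖ κ₂)).map fun q ↦ (q.2.1, q.1, q.2.2), ?_, ?_⟩
  · calc _ = ((ρ₂.fst ⊗ₘ (κ₁ ×ₖ κ₂)).map (Prod.map id Prod.fst)).map Prod.swap := by
          rw [map_map (by fun_prop) (by fun_prop), map_map (by fun_prop) (by fun_prop)]; rfl
      _ = ρ₁ := by
          rw [← compProd_map measurable_fst, ← Kernel.fst_eq, Kernel.fst_prod, hκ₁,
            map_map measurable_swap measurable_swap, Prod.swap_swap_eq, map_id]
  · calc _ = (ρ₂.fst ⊗ₘ (κ₁ ×ₖ κ₂)).map (Prod.map id Prod.snd) := by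
          rw [map_map (by fun_prop) (by fun_prop)]; rfl
      _ = ρ₂ := by
          rw [← compProd_map measurable_snd, ← Kernel.snd_eq, Kernel.snd_prod]
          exact disintegrate _ _

theorem exists_glue_of_sigmaFinite [StandardBorelSpace α] [Nonempty α]
    [StandardBorelSpace γ] [Nonempty γ] (ρ₁ : Measure (α × β)) (ρ₂ : Measure (β × γ))
    (ν : Measure β) [SigmaFinite ν] (h₁ : ρ₁.snd = ν) (h₂ : ρ₂.fst = ν) :
    ∃ η : Measure (α × β × γ),
      η.map (fun z ↦ (z.1, z.2.1)) = ρ₁ ∧ η.map (fun z ↦ (z.2.1, z.2.2)) = ρ₂ := by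
  set S := disjointed (spanningSets ν)
  have hS n : MeasurableSet (S n) := MeasurableSet.disjointed (measurableSet_spanningSets ν) n
  have hνS n : ν (S n) < ∞ :=
    (measure_mono (disjointed_subset _ n)).trans_lt (measure_spanningSets_lt_top ν n)
  have hsnd n : (ρ₁.restrict (Prod.snd ⁻¹' S n)).snd = ν.restrict (S n) := by
    rw [← h₁]; exact (restrict_map measurable_snd (hS n)).symm
  have hfst n : (ρ₂.restrict (Prod.fst ⁻¹' S n)).fst = ν.restrict (S n) := by
    rw [← h₂]; exact (restrict_map measurable_fst (hS n)).symm
  have hglue n : ∃ η : Measure (α × β × γ),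
      η.map (fun z ↦ (z.1, z.2.1)) = ρ₁.restrict (Prod.snd ⁻¹' S n) ∧
      η.map (fun z ↦ (z.2.1, z.2.2)) = ρ₂.restrict (Prod.fst ⁻¹' S n) := by
    have : IsFiniteMeasure (ρ₁.restrict (Prod.snd ⁻¹' S n)) :=
      ⟨by rw [← snd_univ, hsnd, restrict_apply_univ]; exact hνS n⟩
    have : IsFiniteMeasure (ρ₂.restrict (Prod.fst ⁻¹' S n)) :=
      ⟨by rw [← fst_univ, hfst, restrict_apply_univ]; exact hνS n⟩
    exact exists_glue_of_isFiniteMeasure _ _ ((hsnd n).trans (hfst n).symm)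
  choose η hη₁ hη₂ using hglue
  refine ⟨sum η, ?_, ?_⟩
  · rw [map_sum (by fun_prop), funext hη₁,
      sum_restrict_preimage_disjointed_spanningSets ρ₁ measurable_snd ν]
  · rw [map_sum (by fun_prop), funext hη₂,
      sum_restrict_preimage_disjointed_spanningSets ρ₂ measurable_fst ν]

lemma map_restrict_preimage_diag_apply_compl [MeasurableEq β] (ρ : Measure α) {g : α → β}
    (hg : Measurable g) {A : Set β} (hA : MeasurableSet A) :
    (ρ.restrict (g ⁻¹' A)).map (fun z ↦ (g z, g z)) {z : β × β | z.1 = z.2 ∧ z.1 ∈ A}ᶜ = 0 := by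
  have hD : MeasurableSet {z : β × β | z.1 = z.2 ∧ z.1 ∈ A} :=
    (measurableSet_eq_fun measurable_fst measurable_snd).inter (hA.preimage measurable_fst)
  rw [map_apply (hg.prodMk hg) hD.compl, restrict_apply (hD.compl.preimage (hg.prodMk hg))]
  convert measure_empty (μ := ρ)
  ext; simp

end MeasureTheory.Measure

open Measure in
theorem gluing_lemma_partial_transport_general
    {X : Type*} [MetricSpace X] [ProperSpace X] [MeasurableSpace X] [BorelSpace X]
    (A : Set X) (hA : IsClosed A) (hne : A.Nonempty)
    (p : ℝ)
    (μ₁ μ₂ μ₃ : Measure X)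
    (h₂ : MemMp p A μ₂)
    (γ₁₂ : Measure (X × X)) (hγ₁₂ : γ₁₂ ∈ ptAdm A μ₁ μ₂)
    (γ₂₃ : Measure (X × X)) (hγ₂₃ : γ₂₃ ∈ ptAdm A μ₂ μ₃) :
    ∃ (γ : Measure (X × X × X)) (σ₁₂ σ₂₃ : Measure (X × X)),
      σ₁₂ {z : X × X | z.1 = z.2 ∧ z.1 ∈ A}ᶜ = 0 ∧
      σ₂₃ {z : X × X | z.1 = z.2 ∧ z.1 ∈ A}ᶜ = 0 ∧
      γ.map (fun z => (z.1, z.2.1)) = γ₁₂ + σ₁₂ ∧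
      γ.map (fun z => (z.2.1, z.2.2)) = γ₂₃ + σ₂₃ := by
  have : Nonempty X := hne.nonempty
  have : IsLocallyFiniteMeasure μ₂ := h₂.2.1
  have hAm := hA.measurableSet
  obtain ⟨η, hη₁, hη₂⟩ := exists_glue_of_sigmaFinite (γ₁₂.restrict (Prod.snd ⁻¹' Aᶜ))
    (γ₂₃.restrict (Prod.fst ⁻¹' Aᶜ)) μ₂
    (hγ₁₂.2.2 ▸ (restrict_map measurable_snd hAm.compl).symm)
    (hγ₂₃.2.1 ▸ (restrict_map measurable_fst hAm.compl).symm)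
  refine ⟨η + (γ₁₂.restrict (Prod.snd ⁻¹' A)).map (fun z ↦ (z.1, z.2, z.2)) +
      (γ₂₃.restrict (Prod.fst ⁻¹' A)).map (fun z ↦ (z.1, z.1, z.2)),
    (γ₂₃.restrict (Prod.fst ⁻¹' A)).map (fun z ↦ (z.1, z.1)),
    (γ₁₂.restrict (Prod.snd ⁻¹' A)).map (fun z ↦ (z.2, z.2)),
    map_restrict_preimage_diag_apply_compl _ measurable_fst hAm,
    map_restrict_preimage_diag_apply_compl _ measurable_snd hAm, ?_, ?_⟩
  · rw [Measure.map_add _ _ (by fun_prop), Measure.map_add _ _ (by fun_prop), hη₁,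
      map_map (by fun_prop) (by fun_prop), map_map (by fun_prop) (by fun_prop)]
    simp only [Function.comp_def, Prod.mk.eta, Measure.map_id']
    rw [preimage_compl, restrict_compl_add_restrict (hAm.preimage measurable_snd)]
  · rw [Measure.map_add _ _ (by fun_prop), Measure.map_add _ _ (by fun_prop), hη₂,
      map_map (by fun_prop) (by fun_prop), map_map (by fun_prop) (by fun_prop)]
    simp only [Function.comp_def, Prod.mk.eta, Measure.map_id']
    rw [add_right_comm, preimage_compl, restrict_compl_add_restrict (hAm.preimage measurable_fst)]

theorem gluing_lemma_partial_transport
    {X : Type*} [MetricSpace X] [CompleteSpace X] [TopologicalSpace.SeparableSpace X]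
    [ProperSpace X] [MeasurableSpace X] [BorelSpace X]
    (A : Set X) (hA : IsClosed A) (hne : A.Nonempty)
    (p : ℝ) (hp : 1 ≤ p)
    (μ₁ μ₂ μ₃ : Measure X)
    (h₁ : MemMp p A μ₁) (h₂ : MemMp p A μ₂) (h₃ : MemMp p A μ₃)
    (γ₁₂ : Measure (X × X)) (hγ₁₂ : γ₁₂ ∈ ptAdm A μ₁ μ₂)
    (γ₂₃ : Measure (X × X)) (hγ₂₃ : γ₂₃ ∈ ptAdm A μ₂ μ₃) :
    ∃ (γ : Measure (X × X × X)) (σ₁₂ σ₂₃ : Measure (X × X)),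
      σ₁₂ {z : X × X | z.1 = z.2 ∧ z.1 ∈ A}ᶜ = 0 ∧
      σ₂₃ {z : X × X | z.1 = z.2 ∧ z.1 ∈ A}ᶜ = 0 ∧
      γ.map (fun z => (z.1, z.2.1)) = γ₁₂ + σ₁₂ ∧
      γ.map (fun z => (z.2.1, z.2.2)) = γ₂₃ + σ₂₃ :=
  gluing_lemma_partial_transport_general A hA hne p μ₁ μ₂ μ₃ h₂ γ₁₂ hγ₁₂ γ₂₃ hγ₂₃
end

section
/- Let (X,A) be a metric pair with X complete, separable and proper, and p ∈ [1,∞). For any μ, ν ∈ M_p(X,A), the set Opt(μ,ν) = {γ ∈ Adm(μ,ν) : C(γ) = Wb_p(μ,ν)^p} of optimal partial transport plans is nonempty. -/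
open MeasureTheory Metric Set ENNReal Filter

open TopologicalSpace Topology

/-!
Take a minimising sequence of admissible plans `γₙ` and an ultrafilter `F` finer than `atTop`.
A compact subset of `(A ×ˢ A)ᶜ` lies in `P × X ∪ X × Q` with `P, Q` compact subsets of `Aᶜ`, where
the marginals `μ`, `ν` are finite, so the `γₙ` have uniformly bounded mass on it. Hence
`K ↦ lim_F γₙ K` is a content on the open set `(A ×ˢ A)ᶜ`, and its measure `γ` satisfies the
portmanteau inequalities `γ U ≤ lim_F γₙ U` (`U` open) and `lim_F γₙ K ≤ γ K` (`K` compact).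
The first gives `cost γ ≤ lim_F cost γₙ`, the optimal value. For the marginals: by Markov's
inequality for the uniformly bounded costs, little of the mass of `γₙ` above a compact `K ⊆ Aᶜ` is
transported farther than some `T`, and the rest lies in the compact set `π⁻¹ K ∩ {dist ≤ T}`
(`π` a coordinate projection), so the mass `μ K` survives in the limit.
-/

namespace Ultrafilter

variable {ι : Type*} (F : Ultrafilter ι)

theorem tendsto_lim_map {α : Type*} [TopologicalSpace α] [CompactSpace α] (a : ι → α) :
    Tendsto a F (𝓝 (F.map a).lim) :=
  (F.map a).le_nhds_lim

theorem lim_map_const (c : ℝ≥0∞) : (F.map fun _ => c).lim = c :=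
  lim_eq_iff_le_nhds.2 tendsto_const_nhds

theorem lim_map_mono {a b : ι → ℝ≥0∞} (h : ∀ᶠ i in F, a i ≤ b i) :
    (F.map a).lim ≤ (F.map b).lim :=
  le_of_tendsto_of_tendsto (F.tendsto_lim_map a) (F.tendsto_lim_map b) h

theorem lim_map_add (a b : ι → ℝ≥0∞) :
    (F.map fun i => a i + b i).lim = (F.map a).lim + (F.map b).lim :=
  lim_eq_iff_le_nhds.2 ((F.tendsto_lim_map a).add (F.tendsto_lim_map b))

theorem lim_map_const_mul {c : ℝ≥0∞} (hc : c ≠ ⊤) (a : ι → ℝ≥0∞) :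
    (F.map fun i => c * a i).lim = c * (F.map a).lim :=
  lim_eq_iff_le_nhds.2 (ENNReal.Tendsto.const_mul (F.tendsto_lim_map a) (Or.inr hc))

theorem lim_map_finset_sum {κ : Type*} (s : Finset κ) (a : κ → ι → ℝ≥0∞) :
    (F.map fun i => ∑ k ∈ s, a k i).lim = ∑ k ∈ s, (F.map (a k)).lim :=
  lim_eq_iff_le_nhds.2 (tendsto_finsetSum s fun k _ => F.tendsto_lim_map (a k))

theorem tsum_lim_map_le {κ : Type*} (a : κ → ι → ℝ≥0∞) :
    ∑' k, (F.map (a k)).lim ≤ (F.map fun i => ∑' k, a k i).lim := by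
  rw [ENNReal.tsum_eq_iSup_sum]
  refine iSup_le fun s => ?_
  rw [← F.lim_map_finset_sum]
  exact F.lim_map_mono (.of_forall fun i => ENNReal.sum_le_tsum s)

end Ultrafilter

/-- The inequalities are strict so that, for lower semicontinuous `f`, the sets where the steps of
`lowerStaircase δ ∘ f` switch on are open. -/
noncomputable def lowerStaircase (δ a : ℝ≥0∞) : ℝ≥0∞ :=
  ∑' i : ℕ, if (i + 1 : ℝ≥0∞) * δ < a then δ else 0

section lowerStaircase

variable (δ a : ℝ≥0∞)

theorem sum_range_lowerStaircase_le (n : ℕ) :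
    ∑ i ∈ Finset.range n, (if (i + 1 : ℝ≥0∞) * δ < a then δ else 0) ≤ min a (n * δ) := by
  induction n with
  | zero => simp
  | succ n ih =>
    rw [Finset.sum_range_succ]
    split_ifs with h
    · have hsum : _ + δ ≤ ((n : ℝ≥0∞) + 1) * δ :=
        (add_le_add (ih.trans (min_le_right _ _)) le_rfl).trans_eq (by ring)
      push_cast
      exact le_min (hsum.trans h.le) hsum
    · rw [add_zero]
      exact ih.trans (min_le_min_left a (by gcongr; simp))

theorem min_le_sum_range_lowerStaircase_add (n : ℕ) :
    min a ((n + 1) * δ) ≤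
      ∑ i ∈ Finset.range n, (if (i + 1 : ℝ≥0∞) * δ < a then δ else 0) + δ := by
  induction n with
  | zero => simp
  | succ n ih =>
    rw [Finset.sum_range_succ]
    push_cast
    split_ifs with h
    · rw [min_eq_right h.le] at ih
      calc min a ((n + 1 + 1) * δ) ≤ (n + 1) * δ + δ := (min_le_right _ _).trans_eq (by ring)
        _ ≤ _ := add_le_add ih le_rfl
    · rw [add_zero]
      calc min a ((n + 1 + 1) * δ) ≤ a := min_le_left _ _
        _ = min a ((n + 1) * δ) := (min_eq_left (not_lt.1 h)).symm
        _ ≤ _ := ih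

theorem lowerStaircase_le : lowerStaircase δ a ≤ a :=
  ENNReal.tsum_le_of_sum_range_le fun n =>
    (sum_range_lowerStaircase_le δ a n).trans (min_le_left _ _)

theorem le_lowerStaircase_add (hδ : δ ≠ 0) : a ≤ lowerStaircase δ a + δ := by
  by_contra! h
  obtain ⟨n, hn⟩ := ENNReal.exists_nat_mul_gt hδ (h.trans_le le_top).ne
  have := (min_le_sum_range_lowerStaircase_add δ a n).trans
    (add_le_add_left (ENNReal.sum_le_tsum _) δ)
  refine (lt_min h (hn.trans_le ?_)).not_ge this
  gcongr
  exact le_self_add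

end lowerStaircase

theorem tendsto_lowerStaircase (a : ℝ≥0∞) :
    Tendsto (fun m : ℕ => lowerStaircase ((m : ℝ≥0∞) + 1)⁻¹ a) atTop (𝓝 a) := by
  have hδ : Tendsto (fun m : ℕ => ((m : ℝ≥0∞) + 1)⁻¹) atTop (𝓝 0) := by
    simpa [Function.comp_def] using
      ENNReal.tendsto_inv_nat_nhds_zero.comp (tendsto_add_atTop_nat 1)
  refine tendsto_of_tendsto_of_tendsto_of_le_of_le
    (by simpa using ENNReal.Tendsto.sub tendsto_const_nhds hδ (Or.inr zero_ne_top))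
    tendsto_const_nhds (fun m => tsub_le_iff_right.2 (le_lowerStaircase_add _ a (by simp)))
    (fun m => lowerStaircase_le _ a)

section lintegral

variable {Ω : Type*} [MeasurableSpace Ω] {f : Ω → ℝ≥0∞}

theorem measurable_lowerStaircase_comp (hf : Measurable f) (δ : ℝ≥0∞) :
    Measurable fun x => lowerStaircase δ (f x) :=
  Measurable.tsum fun _ =>
    Measurable.ite (measurableSet_lt measurable_const hf) measurable_const measurable_const

theorem lintegral_lowerStaircase (μ : Measure Ω) (hf : Measurable f) (δ : ℝ≥0∞) :
    ∫⁻ x, lowerStaircase δ (f x) ∂μ = ∑' i : ℕ, δ * μ {x | (i + 1 : ℝ≥0∞) * δ < f x} := by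
  simp only [lowerStaircase]
  rw [lintegral_tsum fun _ => (Measurable.ite (measurableSet_lt measurable_const hf)
    measurable_const measurable_const).aemeasurable]
  congr with i
  rw [← lintegral_indicator_const (measurableSet_lt measurable_const hf)]
  congr with x
  simp [Set.indicator_apply]

/-- The staircases reduce this to Fatou's lemma along `atTop` and to countable sums of measures of
open sets, which pass to the limit along `F`. -/
theorem lintegral_le_lim_map_of_forall_isOpen [TopologicalSpace Ω] [OpensMeasurableSpace Ω]
    {ι : Type*} (F : Ultrafilter ι) {μ : Measure Ω} {μs : ι → Measure Ω}
    (hf : LowerSemicontinuous f) (h : ∀ U, IsOpen U → μ U ≤ (F.map fun i => μs i U).lim) :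
    ∫⁻ x, f x ∂μ ≤ (F.map fun i => ∫⁻ x, f x ∂μs i).lim := by
  have hfm := hf.measurable
  have hstep (δ : ℝ≥0∞) (hδ : δ ≠ ⊤) :
      ∫⁻ x, lowerStaircase δ (f x) ∂μ ≤ (F.map fun i => ∫⁻ x, f x ∂μs i).lim :=
    calc ∫⁻ x, lowerStaircase δ (f x) ∂μ
        = ∑' k : ℕ, δ * μ {x | (k + 1 : ℝ≥0∞) * δ < f x} := lintegral_lowerStaircase μ hfm δ
      _ ≤ ∑' k : ℕ, (F.map fun i => δ * μs i {x | (k + 1 : ℝ≥0∞) * δ < f x}).lim :=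
          ENNReal.tsum_le_tsum fun k => by
            rw [F.lim_map_const_mul hδ]
            exact mul_le_mul_right (h _ (hf.isOpen_preimage _)) δ
      _ ≤ (F.map fun i => ∑' k : ℕ, δ * μs i {x | (k + 1 : ℝ≥0∞) * δ < f x}).lim :=
          F.tsum_lim_map_le _
      _ = (F.map fun i => ∫⁻ x, lowerStaircase δ (f x) ∂μs i).lim := by
          simp_rw [lintegral_lowerStaircase _ hfm]
      _ ≤ _ := F.lim_map_mono (.of_forall fun i => lintegral_mono fun x => lowerStaircase_le _ _)
  calc ∫⁻ x, f x ∂μ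
      = ∫⁻ x, liminf (fun m : ℕ => lowerStaircase ((m : ℝ≥0∞) + 1)⁻¹ (f x)) atTop ∂μ := by
        congr with x
        exact (tendsto_lowerStaircase (f x)).liminf_eq.symm
    _ ≤ liminf (fun m : ℕ => ∫⁻ x, lowerStaircase ((m : ℝ≥0∞) + 1)⁻¹ (f x) ∂μ) atTop :=
        lintegral_liminf_le fun m => measurable_lowerStaircase_comp hfm _
    _ ≤ _ := liminf_le_of_frequently_le' (.of_forall fun m => hstep _ (by simp))

end lintegral

/-- Vague convergence of `γs` along `F` to a measure `γ` carried by `E`, in the form of the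
portmanteau inequalities. -/
structure IsVagueLimitOn {Y ι : Type*} [TopologicalSpace Y] [MeasurableSpace Y]
    (F : Ultrafilter ι) (E : Set Y) (γs : ι → Measure Y) (γ : Measure Y) : Prop where
  measure_compl : γ Eᶜ = 0
  le_lim_map_of_isOpen : ∀ U, IsOpen U → γ U ≤ (F.map fun i => γs i U).lim
  lim_map_le_of_isCompact : ∀ K, IsCompact K → K ⊆ E → (F.map fun i => γs i K).lim ≤ γ K

section VagueLimit

variable {Y ι : Type*} [TopologicalSpace Y] [MeasurableSpace Y] [BorelSpace Y]
  (F : Ultrafilter ι) (γs : ι → Measure Y)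

/-- `γ` is the measure of the content `K ↦ lim_F γs K`. -/
theorem exists_isVagueLimitOn_univ [R1Space Y]
    (hbdd : ∀ K, IsCompact K → ∃ M ≠ ⊤, ∀ i, γs i K ≤ M) :
    ∃ γ, IsVagueLimitOn F univ γs γ := by
  have hfin (K : Compacts Y) : (F.map fun i => γs i K).lim ≠ ⊤ := by
    obtain ⟨M, hM, hle⟩ := hbdd K K.isCompact
    exact ne_top_of_le_ne_top hM ((F.lim_map_mono (.of_forall hle)).trans_eq (F.lim_map_const M))
  let ρ : Content Y :=
    { toFun := fun K => (F.map fun i => γs i K).lim.toNNReal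
      mono' := fun K₁ K₂ h =>
        ENNReal.toNNReal_mono (hfin K₂) (F.lim_map_mono (.of_forall fun i => measure_mono h))
      sup_disjoint' := fun K₁ K₂ hdisj _ hK₂ => by
        rw [← ENNReal.toNNReal_add (hfin K₁) (hfin K₂), ← F.lim_map_add]
        congr with i
        simpa using measure_union hdisj hK₂.measurableSet
      sup_le' := fun K₁ K₂ => by
        rw [← ENNReal.toNNReal_add (hfin K₁) (hfin K₂), ← F.lim_map_add]
        exact ENNReal.toNNReal_mono (by simp [F.lim_map_add, hfin])
          (F.lim_map_mono (.of_forall fun i => by simp [measure_union_le])) }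
  have hρ (K : Compacts Y) : ρ K = (F.map fun i => γs i K).lim := ENNReal.coe_toNNReal (hfin K)
  refine ⟨ρ.measure, by simp, fun U hU => ?_, fun K hK _ => ?_⟩
  · rw [ρ.measure_apply hU.measurableSet, ρ.outerMeasure_of_isOpen U hU]
    exact iSup₂_le fun K hKU =>
      (hρ K).trans_le (F.lim_map_mono (.of_forall fun i => measure_mono hKU))
  · calc (F.map fun i => γs i K).lim = ρ ⟨K, hK⟩ := (hρ ⟨K, hK⟩).symm
      _ ≤ ρ.outerMeasure K := ρ.le_outerMeasure_compacts ⟨K, hK⟩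
      _ ≤ ρ.measure K := le_toMeasure_apply _ _ K

theorem exists_isVagueLimitOn [R1Space Y] {E : Set Y} (hE : IsOpen E)
    (hbdd : ∀ K, IsCompact K → K ⊆ E → ∃ M ≠ ⊤, ∀ i, γs i K ≤ M) :
    ∃ γ, IsVagueLimitOn F E γs γ := by
  have he : MeasurableEmbedding (Subtype.val : E → Y) :=
    MeasurableEmbedding.subtype_coe hE.measurableSet
  obtain ⟨γE, hγE⟩ := exists_isVagueLimitOn_univ F (fun i => (γs i).comap Subtype.val)
    fun K hK => by
      obtain ⟨M, hM, hle⟩ :=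
        hbdd _ (hK.image continuous_subtype_val) (Subtype.coe_image_subset _ _)
      exact ⟨M, hM, fun i => (he.comap_apply _ _).trans_le (hle i)⟩
  refine ⟨γE.map Subtype.val, by simp [he.map_apply], fun U hU => ?_, fun K hK hKE => ?_⟩
  · rw [he.map_apply]
    refine (hγE.le_lim_map_of_isOpen _ (hU.preimage continuous_subtype_val)).trans
      (F.lim_map_mono (.of_forall fun i => ?_))
    rw [he.comap_apply]
    exact measure_mono (image_preimage_subset _ _)
  · have hKE' : Subtype.val '' (Subtype.val ⁻¹' K : Set E) = K :=
      image_preimage_eq_of_subset (by simpa using hKE)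
    have hK' : IsCompact (Subtype.val ⁻¹' K : Set E) := by rwa [Subtype.isCompact_iff, hKE']
    rw [he.map_apply]
    convert hγE.lim_map_le_of_isCompact _ hK' (subset_univ _) using 4 with i
    rw [he.comap_apply, hKE']

end VagueLimit

theorem measure_preimage_eq_of_map_restrict_eq {α β : Type*} [MeasurableSpace α]
    [MeasurableSpace β] {γ : Measure α} {μ : Measure β} {f : α → β} {s S : Set β}
    (hf : Measurable f) (h : (γ.map f).restrict s = μ) (hS : MeasurableSet S) (hSs : S ⊆ s) :
    γ (f ⁻¹' S) = μ S := by
  rw [← h, Measure.restrict_apply hS, inter_eq_self_of_subset_left hSs, Measure.map_apply hf hS]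

theorem ext_of_isOpen_subset_compl {α : Type*} [TopologicalSpace α] [MeasurableSpace α]
    [BorelSpace α] [SecondCountableTopology α] {A : Set α} (hA : IsClosed A)
    {ρ μ : Measure α} [IsLocallyFiniteMeasure μ] (hρA : ρ A = 0) (hμA : μ A = 0)
    (h : ∀ U, IsOpen U → U ⊆ Aᶜ → ρ U = μ U) : ρ = μ := by
  refine (μ.finiteSpanningSetsInOpen'.ext BorelSpace.measurable_eq isPiSystem_isOpen
    fun U hU => ?_).symm
  rw [← measure_sdiff_null hρA, ← measure_sdiff_null hμA]
  exact (h _ (hU.sdiff hA) fun x hx => hx.2).symm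

theorem preimage_compl_subset_compl_prod {X : Type*} {π : X × X → X}
    (hπ : π = Prod.fst ∨ π = Prod.snd) (A : Set X) : π ⁻¹' Aᶜ ⊆ (A ×ˢ A)ᶜ := by
  rcases hπ with rfl | rfl
  exacts [fun z hz hzA => hz hzA.1, fun z hz hzA => hz hzA.2]

theorem exists_isCompact_cover_of_subset_compl_prod {X : Type*} [TopologicalSpace X]
    [T2Space X] {A : Set X} (hA : IsClosed A) {K : Set (X × X)} (hK : IsCompact K)
    (hKA : K ⊆ (A ×ˢ A)ᶜ) :
    ∃ P Q : Set X, IsCompact P ∧ IsCompact Q ∧ P ⊆ Aᶜ ∧ Q ⊆ Aᶜ ∧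
      K ⊆ Prod.fst ⁻¹' P ∪ Prod.snd ⁻¹' Q := by
  rw [compl_prod_eq_union, prod_univ, univ_prod] at hKA
  obtain ⟨K₁, K₂, hK₁, hK₂, h₁, h₂, rfl⟩ := hK.binary_compact_cover
    (hA.isOpen_compl.preimage continuous_fst) (hA.isOpen_compl.preimage continuous_snd) hKA
  exact ⟨_, _, hK₁.image continuous_fst, hK₂.image continuous_snd, image_subset_iff.2 h₁,
    image_subset_iff.2 h₂, union_subset_union (subset_preimage_image _ _)
      (subset_preimage_image _ _)⟩

theorem exists_seq_mem_tendsto_biInf {α β : Type*} [CompleteLinearOrder β] [TopologicalSpace β]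
    [OrderTopology β] [FirstCountableTopology β] {s : Set α} (hs : s.Nonempty) (f : α → β) :
    ∃ x : ℕ → α, (∀ n, x n ∈ s) ∧ Tendsto (fun n => f (x n)) atTop (𝓝 (⨅ a ∈ s, f a)) := by
  obtain ⟨u, -, hu, hus⟩ := exists_seq_tendsto_sInf (hs.image f) (OrderBot.bddBelow _)
  choose x hxs hx using hus
  refine ⟨x, hxs, ?_⟩
  simp_rw [hx, ← sInf_image]
  exact hu

section PartialTransport

variable {X : Type*} [MetricSpace X]

theorem add_map_mem_ptAdm [MeasurableSpace X] [BorelSpace X] {A : Set X} (hA : IsClosed A)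
    {a : X} (ha : a ∈ A) {μ ν : Measure X} (hμA : μ A = 0) (hνA : ν A = 0) :
    μ.map (·, a) + ν.map (a, ·) ∈ ptAdm A μ ν := by
  have hl : Measurable fun x : X => (x, a) := measurable_id.prodMk measurable_const
  have hr : Measurable fun y : X => (a, y) := measurable_const.prodMk measurable_id
  have hAA : MeasurableSet (A ×ˢ A) := hA.measurableSet.prod hA.measurableSet
  have hself {ρ : Measure X} (hρA : ρ A = 0) : ρ.restrict Aᶜ = ρ :=
    Measure.restrict_eq_self_of_ae_mem (compl_mem_ae_iff.2 hρA)
  have hdirac : (Measure.dirac a).restrict Aᶜ = 0 := by simp [Measure.restrict_eq_zero, ha]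
  refine ⟨?_, ?_, ?_⟩
  · simp [Measure.map_apply hl hAA, Measure.map_apply hr hAA, ha, hμA, hνA]
  · rw [Measure.map_add _ _ measurable_fst, Measure.map_map measurable_fst hl,
      Measure.map_map measurable_fst hr, Measure.restrict_add]
    simpa [Function.comp_def, hdirac] using hself hμA
  · rw [Measure.map_add _ _ measurable_snd, Measure.map_map measurable_snd hl,
      Measure.map_map measurable_snd hr, Measure.restrict_add]
    simpa [Function.comp_def, hdirac] using hself hνA

theorem exists_forall_mem_ptAdm_measure_le [MeasurableSpace X] [BorelSpace X] {A : Set X}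
    (hA : IsClosed A) {μ ν : Measure X} [IsFiniteMeasureOnCompacts μ]
    [IsFiniteMeasureOnCompacts ν] {K : Set (X × X)} (hK : IsCompact K) (hKA : K ⊆ (A ×ˢ A)ᶜ) :
    ∃ M ≠ ⊤, ∀ γ ∈ ptAdm A μ ν, γ K ≤ M := by
  obtain ⟨P, Q, hP, hQ, hPA, hQA, hKPQ⟩ := exists_isCompact_cover_of_subset_compl_prod hA hK hKA
  refine ⟨μ P + ν Q, add_ne_top.2 ⟨hP.measure_lt_top.ne, hQ.measure_lt_top.ne⟩,
    fun γ hγ => (measure_mono hKPQ).trans ((measure_union_le _ _).trans_eq ?_)⟩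
  rw [measure_preimage_eq_of_map_restrict_eq measurable_fst hγ.2.1 hP.measurableSet hPA,
    measure_preimage_eq_of_map_restrict_eq measurable_snd hγ.2.2 hQ.measurableSet hQA]

theorem continuous_ofReal_dist_rpow {p : ℝ} (hp : 0 ≤ p) :
    Continuous fun z : X × X => ENNReal.ofReal (dist z.1 z.2 ^ p) :=
  ENNReal.continuous_ofReal.comp
    ((continuous_fst.dist continuous_snd).rpow_const fun _ => Or.inr hp)

theorem isCompact_preimage_inter_dist_le [ProperSpace X] {π : X × X → X}
    (hπ : π = Prod.fst ∨ π = Prod.snd) {K : Set X} (hK : IsCompact K) (T : ℝ) :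
    IsCompact (π ⁻¹' K ∩ {z | dist z.1 z.2 ≤ T}) := by
  have hclosed : IsClosed {z : X × X | dist z.1 z.2 ≤ T} :=
    isClosed_le (continuous_fst.dist continuous_snd) continuous_const
  rcases hπ with rfl | rfl
  · refine (hK.prod (hK.cthickening (r := T))).of_isClosed_subset
      ((hK.isClosed.preimage continuous_fst).inter hclosed) ?_
    rintro ⟨x, y⟩ ⟨hx, hxy⟩
    exact ⟨hx, mem_cthickening_of_dist_le y x T K hx (by rwa [dist_comm])⟩
  · refine ((hK.cthickening (r := T)).prod hK).of_isClosed_subset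
      ((hK.isClosed.preimage continuous_snd).inter hclosed) ?_
    rintro ⟨x, y⟩ ⟨hy, hxy⟩
    exact ⟨mem_cthickening_of_dist_le x y T K hy hxy, hy⟩

variable [SecondCountableTopology X] [MeasurableSpace X] [BorelSpace X]

theorem mul_measure_dist_gt_le_ptCost {p : ℝ} (hp : 0 ≤ p) (γ : Measure (X × X)) {T : ℝ}
    (hT : 0 ≤ T) : ENNReal.ofReal (T ^ p) * γ {z | T < dist z.1 z.2} ≤ ptCost p γ :=
  calc ENNReal.ofReal (T ^ p) * γ {z | T < dist z.1 z.2}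
      ≤ ENNReal.ofReal (T ^ p) *
          γ {z | ENNReal.ofReal (T ^ p) ≤ ENNReal.ofReal (dist z.1 z.2 ^ p)} := by
        refine mul_le_mul_right (measure_mono fun z hz => ?_) _
        exact ENNReal.ofReal_le_ofReal (Real.rpow_le_rpow hT (le_of_lt hz) hp)
    _ ≤ ptCost p γ :=
        mul_meas_ge_le_lintegral₀ (continuous_ofReal_dist_rpow hp).measurable.aemeasurable _

theorem exists_forall_measure_dist_gt_le {p : ℝ} (hp : 0 < p) {C : ℝ≥0∞} (hC : C ≠ ⊤)
    {ε : ℝ≥0∞} (hε : 0 < ε) :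
    ∃ T : ℝ, ∀ γ : Measure (X × X), ptCost p γ ≤ C → γ {z | T < dist z.1 z.2} ≤ ε := by
  have hlim : Tendsto (fun T : ℝ => C / ENNReal.ofReal (T ^ p)) atTop (𝓝 0) := by
    have h : Tendsto (fun T : ℝ => ENNReal.ofReal (T ^ p)) atTop (𝓝 ⊤) :=
      ENNReal.tendsto_ofReal_atTop.comp (tendsto_rpow_atTop hp)
    simpa using ENNReal.Tendsto.div tendsto_const_nhds (Or.inr top_ne_zero) h (Or.inr hC)
  obtain ⟨T, hTε, hT⟩ :=
    ((hlim.eventually (gt_mem_nhds hε)).and (eventually_gt_atTop 0)).exists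
  refine ⟨T, fun γ hγ => le_trans ?_ hTε.le⟩
  rw [ENNReal.le_div_iff_mul_le (Or.inl (by simpa using Real.rpow_pos_of_pos hT p))
    (Or.inl ofReal_ne_top), mul_comm]
  exact (mul_measure_dist_gt_le_ptCost hp.le γ hT.le).trans hγ

end PartialTransport

section Marginal

variable {X ι : Type*} [MetricSpace X] [ProperSpace X] [MeasurableSpace X] [BorelSpace X]
  {F : Ultrafilter ι} {A : Set X} {γs : ι → Measure (X × X)} {γ : Measure (X × X)}
  {π : X × X → X} {p : ℝ} {C : ℝ≥0∞} {μ : Measure X}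

theorem IsVagueLimitOn.measure_le_measure_preimage (h : IsVagueLimitOn F (A ×ˢ A)ᶜ γs γ)
    (hπ : π = Prod.fst ∨ π = Prod.snd) (hp : 0 < p) (hC : C ≠ ⊤)
    (hcost : ∀ᶠ i in F, ptCost p (γs i) ≤ C) (hmarg : ∀ i, ((γs i).map π).restrict Aᶜ = μ)
    {K : Set X} (hK : IsCompact K) (hKA : K ⊆ Aᶜ) : μ K ≤ γ (π ⁻¹' K) := by
  have hπm : Measurable π := by rcases hπ with rfl | rfl <;> fun_prop
  refine ENNReal.le_of_forall_pos_le_add fun ε hε _ => ?_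
  obtain ⟨T, hT⟩ := exists_forall_measure_dist_gt_le (X := X) hp hC (ENNReal.coe_pos.2 hε)
  set L := π ⁻¹' K ∩ {z | dist z.1 z.2 ≤ T}
  have hL : IsCompact L := isCompact_preimage_inter_dist_le hπ hK T
  have hLA : L ⊆ (A ×ˢ A)ᶜ :=
    inter_subset_left.trans ((preimage_mono hKA).trans (preimage_compl_subset_compl_prod hπ A))
  have hsplit (i : ι) (hi : ptCost p (γs i) ≤ C) : μ K ≤ γs i L + ε :=
    calc μ K = γs i (π ⁻¹' K) :=
          (measure_preimage_eq_of_map_restrict_eq hπm (hmarg i) hK.measurableSet hKA).symm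
      _ ≤ γs i (L ∪ {z | T < dist z.1 z.2}) :=
          measure_mono fun z hz => (le_or_gt (dist z.1 z.2) T).imp (fun h => ⟨hz, h⟩) id
      _ ≤ γs i L + ε := (measure_union_le _ _).trans (add_le_add le_rfl (hT _ hi))
  calc μ K = (F.map fun _ => μ K).lim := (F.lim_map_const _).symm
    _ ≤ (F.map fun i => γs i L + ε).lim := F.lim_map_mono (hcost.mono hsplit)
    _ = (F.map fun i => γs i L).lim + ε := by rw [F.lim_map_add, F.lim_map_const]
    _ ≤ γ L + ε := add_le_add (h.lim_map_le_of_isCompact L hL hLA) le_rfl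
    _ ≤ γ (π ⁻¹' K) + ε := add_le_add (measure_mono inter_subset_left) le_rfl

theorem IsVagueLimitOn.map_restrict_compl_eq (h : IsVagueLimitOn F (A ×ˢ A)ᶜ γs γ)
    (hA : IsClosed A) (hπ : π = Prod.fst ∨ π = Prod.snd) (hp : 0 < p) (hC : C ≠ ⊤)
    (hcost : ∀ᶠ i in F, ptCost p (γs i) ≤ C) [IsLocallyFiniteMeasure μ] (hμA : μ A = 0)
    (hmarg : ∀ i, ((γs i).map π).restrict Aᶜ = μ) : (γ.map π).restrict Aᶜ = μ := by
  have hπc : Continuous π := by rcases hπ with rfl | rfl <;> fun_prop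
  refine ext_of_isOpen_subset_compl hA ?_ hμA fun U hU hUA => ?_
  · simp [Measure.restrict_apply hA.measurableSet]
  rw [Measure.restrict_apply hU.measurableSet, inter_eq_self_of_subset_left hUA,
    Measure.map_apply hπc.measurable hU.measurableSet]
  refine le_antisymm ?_ ?_
  · calc γ (π ⁻¹' U) ≤ (F.map fun i => γs i (π ⁻¹' U)).lim :=
          h.le_lim_map_of_isOpen _ (hU.preimage hπc)
      _ = μ U := by
          simp_rw [measure_preimage_eq_of_map_restrict_eq hπc.measurable (hmarg _)
            hU.measurableSet hUA, F.lim_map_const]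
  · rw [hU.measure_eq_iSup_isCompact μ]
    exact iSup₂_le fun K hKU => iSup_le fun hK =>
      (h.measure_le_measure_preimage hπ hp hC hcost hmarg hK (hKU.trans hUA)).trans
        (measure_mono (preimage_mono hKU))

end Marginal

theorem exists_optimal_partial_transport_plan_general
    {X : Type*} [MetricSpace X]
    [ProperSpace X] [MeasurableSpace X] [BorelSpace X]
    (A : Set X) (hA : IsClosed A) (hne : A.Nonempty)
    (p : ℝ) (hp : 1 ≤ p)
    (μ ν : Measure X) (hμ : MemMp p A μ) (hν : MemMp p A ν) :
    ∃ γ ∈ ptAdm A μ ν, ptCost p γ = WbPow p A μ ν := by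
  obtain ⟨a, ha⟩ := hne
  have hp₀ : 0 < p := by linarith
  have := hμ.2.1
  have := hν.2.1
  have hadm := add_map_mem_ptAdm hA ha hμ.1 hν.1
  by_cases hc : WbPow p A μ ν = ⊤
  · exact ⟨_, hadm, le_antisymm (hc ▸ le_top) (iInf₂_le _ hadm)⟩
  obtain ⟨γs, hγs, hlim⟩ := exists_seq_mem_tendsto_biInf ⟨_, hadm⟩ (ptCost p)
  obtain ⟨F, hF⟩ := exists_ultrafilter_le (atTop : Filter ℕ)
  obtain ⟨γ, hγ⟩ := exists_isVagueLimitOn F γs (hA.prod hA).isOpen_compl fun K hK hKA =>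
    (exists_forall_mem_ptAdm_measure_le hA hK hKA).imp fun _ hM => ⟨hM.1, fun n => hM.2 _ (hγs n)⟩
  have hC : WbPow p A μ ν + 1 ≠ ⊤ := by simp [hc]
  have hcost : ∀ᶠ n in F, ptCost p (γs n) ≤ WbPow p A μ ν + 1 :=
    hF (hlim.eventually (eventually_le_nhds (ENNReal.lt_add_right hc one_ne_zero)))
  have hmem : γ ∈ ptAdm A μ ν :=
    ⟨by simpa using hγ.measure_compl,
      hγ.map_restrict_compl_eq hA (.inl rfl) hp₀ hC hcost hμ.1 fun n => (hγs n).2.1,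
      hγ.map_restrict_compl_eq hA (.inr rfl) hp₀ hC hcost hν.1 fun n => (hγs n).2.2⟩
  refine ⟨γ, hmem, le_antisymm ?_ (iInf₂_le γ hmem)⟩
  calc ptCost p γ ≤ (F.map fun n => ptCost p (γs n)).lim :=
        lintegral_le_lim_map_of_forall_isOpen F
          (continuous_ofReal_dist_rpow hp₀.le).lowerSemicontinuous hγ.le_lim_map_of_isOpen
    _ = WbPow p A μ ν := Ultrafilter.lim_eq_iff_le_nhds.2 (hlim.mono_left hF)

theorem exists_optimal_partial_transport_plan
    {X : Type*} [MetricSpace X] [CompleteSpace X] [TopologicalSpace.SeparableSpace X]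
    [ProperSpace X] [MeasurableSpace X] [BorelSpace X]
    (A : Set X) (hA : IsClosed A) (hne : A.Nonempty)
    (p : ℝ) (hp : 1 ≤ p)
    (μ ν : Measure X) (hμ : MemMp p A μ) (hν : MemMp p A ν) :
    ∃ γ ∈ ptAdm A μ ν, ptCost p γ = WbPow p A μ ν :=
  exists_optimal_partial_transport_plan_general A hA hne p hp μ ν hμ hν
end

section
/- Let (X,A) be a metric pair with X complete, separable and proper, and p ∈ [1,∞). Then the metric space (M_p(X,A), Wb_p) is separable; in fact, the set of finite rational-weighted sums of Dirac masses at points of a countable dense subset of Ω = X \ A is dense in (M_p(X,A), Wb_p). -/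
open MeasureTheory Metric Set ENNReal Filter

/-!
Assign to every `x ∉ A` a point `s ∈ S` with `d(x, s) < δ · d(x, A)`, measurably, by taking the
first suitable point of an enumeration of `S`. Pushing `μ` forward along this assignment costs at
most `δ^p ∫ d(·, A)^p dμ`, and since `d(·, A)` is bounded below on each fibre, every fibre has
finite mass. To make the weights rational and finitely many, keep on the `k`-th fibre only a
fraction `c_k ∈ [1 - η, 1]` of `μ` for which the transported mass is rational, with `c_k = 0` on a
tail of fibres carrying less than `η` of `∫ d(·, A)^p dμ`; the discarded mass is sent to `A` along
an almost-nearest-point map at cost at most `2^p` times its share of `∫ d(·, A)^p dμ`. The two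
plans glue because `Wb_p^p` is subadditive under sums of measures.
-/

section Plans

variable {X : Type*} [MeasurableSpace X] {A : Set X}

theorem add_mem_ptAdm {μ₁ μ₂ ν₁ ν₂ : Measure X} {γ₁ γ₂ : Measure (X × X)}
    (h₁ : γ₁ ∈ ptAdm A μ₁ ν₁) (h₂ : γ₂ ∈ ptAdm A μ₂ ν₂) :
    γ₁ + γ₂ ∈ ptAdm A (μ₁ + μ₂) (ν₁ + ν₂) := by
  obtain ⟨hA₁, hfst₁, hsnd₁⟩ := h₁
  obtain ⟨hA₂, hfst₂, hsnd₂⟩ := h₂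
  refine ⟨by simp [hA₁, hA₂], ?_, ?_⟩
  · rw [Measure.map_add _ _ measurable_fst, Measure.restrict_add, hfst₁, hfst₂]
  · rw [Measure.map_add _ _ measurable_snd, Measure.restrict_add, hsnd₁, hsnd₂]

variable [PseudoMetricSpace X] {p : ℝ}

theorem wb_lt_of_wbPow_lt (hp : 0 < p) {μ ν : Measure X} {ε : ℝ≥0∞}
    (h : WbPow p A μ ν < ε ^ p) : Wb p A μ ν < ε := by
  have := ENNReal.rpow_lt_rpow h (one_div_pos.mpr hp)
  rwa [← ENNReal.rpow_mul, mul_one_div_cancel hp.ne', ENNReal.rpow_one] at this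

theorem wbPow_add_le (μ₁ μ₂ ν₁ ν₂ : Measure X) :
    WbPow p A (μ₁ + μ₂) (ν₁ + ν₂) ≤ WbPow p A μ₁ ν₁ + WbPow p A μ₂ ν₂ :=
  ENNReal.le_iInf₂_add_iInf₂ fun _ h₁ _ h₂ =>
    (iInf₂_le _ (add_mem_ptAdm h₁ h₂)).trans_eq (lintegral_add_measure _ _ _)

theorem wbPow_map_le_of_dist_le (hA : MeasurableSet A) (hp : 0 ≤ p) {σ : Measure X}
    (hσ : σ A = 0) {π : X → X} (hπ : Measurable π) {C : ℝ} (hC : 0 ≤ C)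
    (hπA : ∀ x ∉ A, dist x (π x) ≤ C * infDist x A) :
    WbPow p A σ ((σ.map π).restrict Aᶜ) ≤
      ENNReal.ofReal (C ^ p) * ∫⁻ x, ENNReal.ofReal (infDist x A ^ p) ∂σ := by
  have hgraph : Measurable fun x => (x, π x) := measurable_id.prodMk hπ
  have hadm : σ.map (fun x => (x, π x)) ∈ ptAdm A σ ((σ.map π).restrict Aᶜ) := by
    refine ⟨?_, ?_, ?_⟩
    · rw [Measure.map_apply hgraph (hA.prod hA)]
      exact measure_mono_null (fun x hx => hx.1) hσ
    · rw [Measure.map_map measurable_fst hgraph, Function.comp_def, Measure.map_id']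
      exact Measure.restrict_eq_self_of_ae_mem (measure_eq_zero_iff_ae_notMem.mp hσ)
    · rw [Measure.map_map measurable_snd hgraph]
      rfl
  calc WbPow p A σ ((σ.map π).restrict Aᶜ)
      ≤ ∫⁻ x, ENNReal.ofReal (dist x (π x) ^ p) ∂σ :=
        (iInf₂_le _ hadm).trans (lintegral_map_le _ _)
    _ ≤ ∫⁻ x, ENNReal.ofReal (C ^ p) * ENNReal.ofReal (infDist x A ^ p) ∂σ := by
        refine lintegral_mono_ae ((measure_eq_zero_iff_ae_notMem.mp hσ).mono fun x hx => ?_)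
        rw [← ENNReal.ofReal_mul (by positivity), ← Real.mul_rpow hC infDist_nonneg]
        exact ENNReal.ofReal_le_ofReal (Real.rpow_le_rpow dist_nonneg (hπA x hx) hp)
    _ = ENNReal.ofReal (C ^ p) * ∫⁻ x, ENNReal.ofReal (infDist x A ^ p) ∂σ :=
        lintegral_const_mul' _ _ ENNReal.ofReal_ne_top

end Plans

section Selection

variable {X : Type*} [PseudoMetricSpace X] [MeasurableSpace X] [OpensMeasurableSpace X]
  {p : ℝ} {A : Set X}

theorem exists_measurable_index_dist_lt (a : ℕ → X) {r : X → ℝ} (hr : Measurable r) :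
    ∃ κ : X → ℕ, Measurable κ ∧ ∀ x k, dist x (a k) < r x → dist x (a (κ x)) < r x := by
  classical
  have hdist : ∀ k, Measurable fun x => dist x (a k) :=
    fun k => (continuous_id.dist continuous_const).measurable
  -- The fallback disjunct makes `P x` satisfiable for every `x`, so `Nat.find` is total.
  let P : X → ℕ → Prop := fun x k => dist x (a k) < r x ∨ ∀ j, r x ≤ dist x (a j)
  have hP : ∀ x, ∃ k, P x k := fun x =>
    (em (∀ j, r x ≤ dist x (a j))).elim (fun h => ⟨0, Or.inr h⟩) fun h =>
      (not_forall.mp h).imp fun _ hj => Or.inl (not_le.mp hj)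
  refine ⟨fun x => Nat.find (hP x), measurable_find hP fun k => ?_, fun x k hk => ?_⟩
  · simp only [P, ofPred_or, ofPred_forall]
    exact (measurableSet_lt (hdist k) hr).union
      (MeasurableSet.iInter fun j => measurableSet_le hr (hdist j))
  · exact (Nat.find_spec (hP x)).resolve_right fun h => (h k).not_gt hk

theorem wbPow_zero_le [TopologicalSpace.SeparableSpace X] (hA : IsClosed A) (hne : A.Nonempty)
    (hp : 0 ≤ p) {σ : Measure X} (hσ : σ A = 0) :
    WbPow p A σ 0 ≤ ENNReal.ofReal (2 ^ p) * ∫⁻ x, ENNReal.ofReal (infDist x A ^ p) ∂σ := by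
  obtain ⟨D, hDA, hDc, hAD⟩ :=
    (TopologicalSpace.IsSeparable.of_separableSpace A).exists_countable_dense_subset
  obtain ⟨a, rfl⟩ := hDc.exists_eq_range (closure_nonempty_iff.mp (hne.mono hAD))
  have hclosure : closure (range a) = A := (closure_minimal hDA hA).antisymm hAD
  obtain ⟨κ, hκ, hκa⟩ := exists_measurable_index_dist_lt a
    (continuous_const.mul (continuous_infDist_pt A)).measurable
  have hπ : Measurable (a ∘ κ) := measurable_from_nat.comp hκ
  have hmap : (σ.map (a ∘ κ)).restrict Aᶜ = 0 := by
    rw [Measure.restrict_eq_zero, Measure.map_apply hπ hA.measurableSet.compl]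
    convert measure_empty (μ := σ)
    exact eq_empty_of_forall_notMem fun x hx => hx (hDA (mem_range_self _))
  rw [← hmap]
  refine wbPow_map_le_of_dist_le hA.measurableSet hp hσ hπ zero_le_two fun x hx => ?_
  have hlt : infDist x (range a) < 2 * infDist x A := by
    rw [← infDist_closure, hclosure]
    linarith [(hA.notMem_iff_infDist_pos hne).mp hx]
  obtain ⟨_, ⟨k, rfl⟩, hk⟩ := (infDist_lt_iff (range_nonempty a)).mp hlt
  exact (hκa x k hk).le

end Selection

section DiracSums

variable {X Y : Type*} [MeasurableSpace X] [MeasurableSpace Y]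

def ratDiracSums (S : Set X) : AddSubmonoid (Measure X) where
  carrier := {ν | ∃ (n : ℕ) (q : Fin n → ℚ) (x : Fin n → X), (∀ i, 0 < q i) ∧ (∀ i, x i ∈ S) ∧
    ν = ∑ i, ENNReal.ofReal (q i : ℝ) • Measure.dirac (x i)}
  zero_mem' := ⟨0, Fin.elim0, Fin.elim0, Fin.rec0, Fin.rec0, by simp⟩
  add_mem' := by
    rintro _ _ ⟨n, q, x, hq, hx, rfl⟩ ⟨n', q', x', hq', hx', rfl⟩
    refine ⟨n + n', Fin.append q q', Fin.append x x', Fin.addCases ?_ ?_, Fin.addCases ?_ ?_, ?_⟩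
    all_goals simp [Fin.sum_univ_add, hq, hq', hx, hx']

theorem ofReal_smul_dirac_mem_ratDiracSums {S : Set X} {q : ℚ} (hq : 0 ≤ q) {x : X}
    (hx : x ∈ S) : ENNReal.ofReal q • Measure.dirac x ∈ ratDiracSums S := by
  rcases hq.eq_or_lt with rfl | hq
  · simp
  · exact ⟨1, fun _ => q, fun _ => x, fun _ => hq, fun _ => hx, by simp⟩

theorem map_mem_ratDiracSums {f : X → Y} (hf : Measurable f) {S : Set X} {ν : Measure X}
    (hν : ν ∈ ratDiracSums S) : ν.map f ∈ ratDiracSums (f '' S) := by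
  obtain ⟨n, q, x, hq, hx, rfl⟩ := hν
  refine ⟨n, q, f ∘ x, hq, fun i => mem_image_of_mem f (hx i), ?_⟩
  simp [Measure.map_finset_sum hf.aemeasurable, Measure.map_smul, Measure.map_dirac' hf]

theorem mem_ratDiracSums_of_apply_singleton {τ : Measure ℕ} {q : ℕ → ℚ} (hq : ∀ k, 0 ≤ q k)
    {m : ℕ} (hm : ∀ k, m ≤ k → q k = 0) (hτ : ∀ k, τ {k} = ENNReal.ofReal (q k)) :
    τ ∈ ratDiracSums univ := by
  have hsum : Measure.sum (fun k => τ {k} • Measure.dirac k) =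
      ∑ k ∈ Finset.range m, τ {k} • Measure.dirac k := by
    ext s hs
    rw [Measure.sum_apply _ hs, Measure.finsetSum_apply]
    refine tsum_eq_sum fun k hk => ?_
    simp [hτ, hm k (by simpa using hk)]
  rw [← τ.sum_smul_dirac, hsum]
  exact sum_mem fun k _ => hτ k ▸ ofReal_smul_dirac_mem_ratDiracSums (hq k) (mem_univ k)

end DiracSums

section Reweighting

variable {X : Type*} [MeasurableSpace X]

theorem exists_near_one_mul_eq_rat {t : ℝ} (ht : 0 ≤ t) {η : ℝ} (hη : 0 < η) :
    ∃ c : ℝ, 0 ≤ c ∧ c ≤ 1 ∧ 1 - η ≤ c ∧ ∃ q : ℚ, c * t = q := by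
  rcases ht.eq_or_lt with rfl | ht
  · exact ⟨1, zero_le_one, le_rfl, by linarith, 0, by simp⟩
  have hlt : max 0 ((1 - η) * t) < t := max_lt ht (by nlinarith)
  obtain ⟨q, hq₁, hq₂⟩ := exists_rat_btwn hlt
  exact ⟨q / t, div_nonneg ((le_max_left _ _).trans hq₁.le) ht.le, (div_le_one ht).mpr hq₂.le,
    (le_div_iff₀ ht).mpr ((le_max_right _ _).trans hq₁.le), q, div_mul_cancel₀ _ ht.ne'⟩

theorem exists_setLIntegral_index_ge_lt {μ : Measure X} {κ : X → ℕ} (hκ : Measurable κ)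
    {f : X → ℝ≥0∞} (hf : ∫⁻ x, f x ∂μ ≠ ⊤) {ε : ℝ≥0∞} (hε : 0 < ε) :
    ∃ m, ∫⁻ x in {x | m ≤ κ x}, f x ∂μ < ε := by
  have hmeas : ∀ m, MeasurableSet {x | m ≤ κ x} := fun m => measurableSet_le measurable_const hκ
  have hempty : ⋂ m, {x | m ≤ κ x} = ∅ :=
    eq_empty_of_forall_notMem fun x hx => (mem_iInter.mp hx (κ x + 1)).not_gt (Nat.lt_succ_self _)
  have hfin : μ.withDensity f {x | 0 ≤ κ x} ≠ ⊤ := ne_top_of_le_ne_top hf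
    ((withDensity_apply _ (hmeas 0)).trans_le (setLIntegral_le_lintegral _ _))
  have htail := tendsto_measure_iInter_atTop (μ := μ.withDensity f)
    (fun m => (hmeas m).nullMeasurableSet) (fun _ _ h _ hx => h.trans hx) ⟨0, hfin⟩
  rw [hempty, measure_empty] at htail
  obtain ⟨m, hm⟩ := (htail.eventually (gt_mem_nhds hε)).exists
  exact ⟨m, (withDensity_apply _ (hmeas m)).symm.trans_lt hm⟩

theorem lintegral_one_sub_mul_le {μ : Measure X} {κ : X → ℕ} (hκ : Measurable κ)
    {f : X → ℝ≥0∞} (hf : Measurable f) {c : ℕ → ℝ} (hc₀ : ∀ k, 0 ≤ c k) {η : ℝ} {m : ℕ}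
    (hcη : ∀ k < m, 1 - η ≤ c k) :
    ∫⁻ x, (1 - ENNReal.ofReal (c (κ x))) * f x ∂μ ≤
      ENNReal.ofReal η * ∫⁻ x, f x ∂μ + ∫⁻ x in {x | m ≤ κ x}, f x ∂μ := by
  have hpoint : ∀ x, (1 - ENNReal.ofReal (c (κ x))) * f x ≤
      ENNReal.ofReal η * f x + {x | m ≤ κ x}.indicator f x := fun x => by
    by_cases hx : x ∈ {x | m ≤ κ x}
    · rw [indicator_of_mem hx]
      exact (mul_le_of_le_one_left' tsub_le_self).trans le_add_self
    · rw [indicator_of_notMem hx, add_zero, ← ENNReal.ofReal_one, ← ENNReal.ofReal_sub _ (hc₀ _)]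
      gcongr
      linarith [hcη _ (not_le.mp hx)]
  refine (lintegral_mono hpoint).trans_eq ?_
  rw [lintegral_add_left (hf.const_mul _), lintegral_const_mul _ hf,
    lintegral_indicator (measurableSet_le measurable_const hκ)]

theorem exists_density_le_one_map_mem_ratDiracSums {μ : Measure X} {κ : X → ℕ}
    (hκ : Measurable κ) (hfin : ∀ k, μ (κ ⁻¹' {k}) ≠ ⊤) {f : X → ℝ≥0∞} (hfm : Measurable f)
    (hf : ∫⁻ x, f x ∂μ ≠ ⊤) {η : ℝ} (hη : 0 < η) :
    ∃ g : X → ℝ≥0∞, Measurable g ∧ (∀ x, g x ≤ 1) ∧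
      (μ.withDensity g).map κ ∈ ratDiracSums univ ∧
      ∫⁻ x, (1 - g x) * f x ∂μ ≤ ENNReal.ofReal η * (∫⁻ x, f x ∂μ + 1) := by
  obtain ⟨m, hm⟩ := exists_setLIntegral_index_ge_lt hκ hf (ENNReal.ofReal_pos.mpr hη)
  have hweights : ∀ k, ∃ c : ℝ, 0 ≤ c ∧ c ≤ 1 ∧ (k < m → 1 - η ≤ c) ∧ (m ≤ k → c = 0) ∧
      ∃ q : ℚ, c * (μ (κ ⁻¹' {k})).toReal = q := fun k => by
    by_cases hk : k < m
    · obtain ⟨c, hc₀, hc₁, hcη, hq⟩ := exists_near_one_mul_eq_rat ENNReal.toReal_nonneg hη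
      exact ⟨c, hc₀, hc₁, fun _ => hcη, fun h => absurd hk (not_lt.mpr h), hq⟩
    · exact ⟨0, le_rfl, zero_le_one, fun h => absurd h hk, fun _ => rfl, 0, by simp⟩
  choose c hc₀ hc₁ hcη hcm q hq using hweights
  have hq₀ : ∀ k, 0 ≤ q k := fun k => by
    exact_mod_cast (hq k).symm.trans_ge (mul_nonneg (hc₀ k) ENNReal.toReal_nonneg)
  refine ⟨fun x => ENNReal.ofReal (c (κ x)),
    (measurable_from_nat (f := fun k => ENNReal.ofReal (c k))).comp hκ,
    fun x => ENNReal.ofReal_le_one.mpr (hc₁ _), ?_, ?_⟩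
  · refine mem_ratDiracSums_of_apply_singleton hq₀ (m := m)
      (fun k hk => by simpa [hcm k hk] using (hq k).symm) fun k => ?_
    have hk : MeasurableSet (κ ⁻¹' {k}) := hκ (measurableSet_singleton k)
    rw [Measure.map_apply hκ (measurableSet_singleton k), withDensity_apply _ hk,
      setLIntegral_congr_fun hk fun x (hx : κ x = k) => by rw [hx], setLIntegral_const,
      ← ENNReal.ofReal_toReal (hfin k), ← ENNReal.ofReal_mul (hc₀ k), hq]
  · calc ∫⁻ x, (1 - ENNReal.ofReal (c (κ x))) * f x ∂μ
        ≤ ENNReal.ofReal η * ∫⁻ x, f x ∂μ + ∫⁻ x in {x | m ≤ κ x}, f x ∂μ :=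
          lintegral_one_sub_mul_le hκ hfm hc₀ hcη
      _ ≤ ENNReal.ofReal η * (∫⁻ x, f x ∂μ + 1) := by
        rw [mul_add, mul_one]
        gcongr

end Reweighting

section Approximation

variable {X : Type*} [PseudoMetricSpace X] [MeasurableSpace X] [OpensMeasurableSpace X]

theorem measurable_ofReal_infDist_rpow (A : Set X) (p : ℝ) :
    Measurable fun x => ENNReal.ofReal (infDist x A ^ p) :=
  ((continuous_infDist_pt A).measurable.pow_const p).ennreal_ofReal

variable {p : ℝ} {A : Set X}

theorem measure_preimage_index_ne_top (hA : IsClosed A) (hne : A.Nonempty) (hp : 0 < p)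
    {a : ℕ → X} (haA : ∀ k, a k ∉ A) {δ : ℝ} (hδ : 0 ≤ δ) {κ : X → ℕ}
    (hκ : ∀ x ∉ A, dist x (a (κ x)) < δ * infDist x A) {μ : Measure X} (hμA : μ A = 0)
    (hI : ∫⁻ x, ENNReal.ofReal (infDist x A ^ p) ∂μ ≠ ⊤) (k : ℕ) : μ (κ ⁻¹' {k}) ≠ ⊤ := by
  have hk : 0 < infDist (a k) A := (hA.notMem_iff_infDist_pos hne).mp (haA k)
  set b := ENNReal.ofReal ((infDist (a k) A / (1 + δ)) ^ p)
  have hb : b ≠ 0 := (ENNReal.ofReal_pos.mpr (by positivity)).ne'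
  have hsub : κ ⁻¹' {k} ⊆ A ∪ {x | b ≤ ENNReal.ofReal (infDist x A ^ p)} := by
    refine fun x (hx : κ x = k) => or_iff_not_imp_left.mpr fun hxA => ?_
    have hlt : infDist (a k) A < (1 + δ) * infDist x A := by
      have := hκ x hxA
      rw [hx, dist_comm] at this
      linarith [infDist_le_infDist_add_dist (x := a k) (y := x) (s := A)]
    refine ENNReal.ofReal_le_ofReal (Real.rpow_le_rpow (by positivity) ?_ hp.le)
    exact (div_le_iff₀ (by linarith)).mpr (by linarith)
  refine ne_top_of_le_ne_top ?_ ((measure_mono hsub).trans (measure_union_le _ _))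
  rw [hμA, zero_add]
  exact ne_top_of_le_ne_top (ENNReal.div_ne_top hI hb)
    (meas_ge_le_lintegral_div (measurable_ofReal_infDist_rpow A p).aemeasurable hb
      ENNReal.ofReal_ne_top)

theorem wbPow_map_withDensity_le [TopologicalSpace.SeparableSpace X] (hA : IsClosed A)
    (hne : A.Nonempty) (hp : 0 ≤ p) {μ : Measure X} (hμA : μ A = 0) {g : X → ℝ≥0∞}
    (hg : Measurable g) (hg₁ : ∀ x, g x ≤ 1) {π : X → X} (hπ : Measurable π)
    (hπA : ∀ x, π x ∉ A) {C : ℝ} (hC : 0 ≤ C) (hπC : ∀ x ∉ A, dist x (π x) ≤ C * infDist x A) :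
    WbPow p A μ ((μ.withDensity g).map π) ≤
      ENNReal.ofReal (C ^ p) * ∫⁻ x, ENNReal.ofReal (infDist x A ^ p) ∂μ +
        ENNReal.ofReal (2 ^ p) * ∫⁻ x, (1 - g x) * ENNReal.ofReal (infDist x A ^ p) ∂μ := by
  set θ := μ.withDensity g
  have hf := measurable_ofReal_infDist_rpow A p
  have hν : (θ.map π).restrict Aᶜ = θ.map π :=
    Measure.restrict_eq_self_of_ae_mem ((ae_map_iff hπ.aemeasurable hA.measurableSet.compl).mpr
      (ae_of_all _ hπA))
  have hsplit : μ = θ + μ.withDensity (1 - g) := by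
    rw [← withDensity_add_left hg, add_tsub_cancel_of_le (fun x => hg₁ x), withDensity_one]
  calc WbPow p A μ (θ.map π)
      = WbPow p A (θ + μ.withDensity (1 - g)) ((θ.map π).restrict Aᶜ + 0) := by
        rw [hν, add_zero, ← hsplit]
    _ ≤ ENNReal.ofReal (C ^ p) * ∫⁻ x, ENNReal.ofReal (infDist x A ^ p) ∂θ +
        ENNReal.ofReal (2 ^ p) *
          ∫⁻ x, ENNReal.ofReal (infDist x A ^ p) ∂μ.withDensity (1 - g) :=
        (wbPow_add_le _ _ _ _).trans (add_le_add
          (wbPow_map_le_of_dist_le hA.measurableSet hp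
            (withDensity_absolutelyContinuous μ g hμA) hπ hC hπC)
          (wbPow_zero_le hA hne hp (withDensity_absolutelyContinuous μ _ hμA)))
    _ ≤ _ := by
        rw [lintegral_withDensity_eq_lintegral_mul _ hg hf, lintegral_withDensity_eq_lintegral_mul _
          (show Measurable (1 - g) from measurable_const.sub hg) hf]
        gcongr
        · exact mul_le_of_le_one_left' (hg₁ _)
        · exact le_rfl

theorem exists_mem_ratDiracSums_wbPow_le [TopologicalSpace.SeparableSpace X] (hA : IsClosed A)
    (hne : A.Nonempty) (hp : 0 < p) {a : ℕ → X} (haA : ∀ k, a k ∉ A)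
    (hdense : Aᶜ ⊆ closure (range a)) {μ : Measure X} (hμA : μ A = 0)
    (hI : ∫⁻ x, ENNReal.ofReal (infDist x A ^ p) ∂μ ≠ ⊤) {η : ℝ} (hη : 0 < η) :
    ∃ ν ∈ ratDiracSums (range a), WbPow p A μ ν ≤ ENNReal.ofReal η *
      (∫⁻ x, ENNReal.ofReal (infDist x A ^ p) ∂μ +
        ENNReal.ofReal (2 ^ p) * (∫⁻ x, ENNReal.ofReal (infDist x A ^ p) ∂μ + 1)) := by
  set δ := η ^ p⁻¹
  have hδ : 0 < δ := Real.rpow_pos_of_pos hη _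
  obtain ⟨κ, hκ, hκa⟩ := exists_measurable_index_dist_lt a
    (measurable_const.mul (continuous_infDist_pt A).measurable)
  have hcover : ∀ x ∉ A, dist x (a (κ x)) < δ * infDist x A := fun x hx => by
    have hpos := (hA.notMem_iff_infDist_pos hne).mp hx
    obtain ⟨k, hk⟩ := mem_closure_range_iff.mp (hdense hx) _ (mul_pos hδ hpos)
    exact hκa x k hk
  obtain ⟨g, hg, hg₁, hmem, hsmall⟩ := exists_density_le_one_map_mem_ratDiracSums hκ
    (measure_preimage_index_ne_top hA hne hp haA hδ.le hcover hμA hI)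
    (measurable_ofReal_infDist_rpow A p) hI hη
  refine ⟨(μ.withDensity g).map (a ∘ κ), ?_, ?_⟩
  · rw [← Measure.map_map measurable_from_nat hκ, ← image_univ]
    exact map_mem_ratDiracSums measurable_from_nat hmem
  calc WbPow p A μ ((μ.withDensity g).map (a ∘ κ))
      ≤ ENNReal.ofReal (δ ^ p) * ∫⁻ x, ENNReal.ofReal (infDist x A ^ p) ∂μ +
        ENNReal.ofReal (2 ^ p) * ∫⁻ x, (1 - g x) * ENNReal.ofReal (infDist x A ^ p) ∂μ :=
        wbPow_map_withDensity_le hA hne hp.le hμA hg hg₁ (measurable_from_nat.comp hκ)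
          (fun x => haA (κ x)) hδ.le fun x hx => (hcover x hx).le
    _ ≤ ENNReal.ofReal η * ∫⁻ x, ENNReal.ofReal (infDist x A ^ p) ∂μ +
        ENNReal.ofReal (2 ^ p) *
          (ENNReal.ofReal η * (∫⁻ x, ENNReal.ofReal (infDist x A ^ p) ∂μ + 1)) := by
        rw [Real.rpow_inv_rpow hη.le hp.ne']
        gcongr
    _ = _ := by ring

end Approximation

theorem wb_space_separable_general
    {X : Type*} [MetricSpace X] [TopologicalSpace.SeparableSpace X]
    [MeasurableSpace X] [BorelSpace X]
    (A : Set X) (hA : IsClosed A) (hne : A.Nonempty)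
    (p : ℝ) (hp : 1 ≤ p)
    (S : Set X) (hScount : S.Countable) (hSsub : S ⊆ Aᶜ) (hSdense : Aᶜ ⊆ closure S) :
    ∀ μ : Measure X, MemMp p A μ → ∀ ε : ℝ≥0∞, 0 < ε →
      ∃ ν : Measure X,
        (∃ (n : ℕ) (q : Fin n → ℚ) (x : Fin n → X),
          (∀ i, 0 < q i) ∧ (∀ i, x i ∈ S) ∧
          ν = ∑ i, ENNReal.ofReal (q i : ℝ) • Measure.dirac (x i)) ∧
        Wb p A μ ν < ε := by
  rintro μ ⟨hμA, -, hI⟩ ε hε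
  have hp₀ : 0 < p := zero_lt_one.trans_le hp
  have hεp : 0 < ε ^ p := ENNReal.rpow_pos_of_nonneg hε hp₀.le
  rcases S.eq_empty_or_nonempty with rfl | hS
  · rw [closure_empty, subset_empty_iff, compl_empty_iff] at hSdense
    obtain rfl : μ = 0 := by rwa [hSdense, Measure.measure_univ_eq_zero] at hμA
    refine ⟨0, zero_mem (ratDiracSums ∅), wb_lt_of_wbPow_lt hp₀ ?_⟩
    exact (wbPow_zero_le hA hne hp₀.le rfl).trans_lt (by simpa using hεp)
  obtain ⟨a, rfl⟩ := hScount.exists_eq_range hS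
  obtain ⟨η, hη, hηε⟩ := ENNReal.exists_nnreal_pos_mul_lt (ENNReal.add_ne_top.mpr ⟨hI,
    ENNReal.mul_ne_top ENNReal.ofReal_ne_top (ENNReal.add_ne_top.mpr ⟨hI, ENNReal.one_ne_top⟩)⟩)
    hεp.ne'
  obtain ⟨ν, hν, hle⟩ := exists_mem_ratDiracSums_wbPow_le hA hne hp₀
    (fun k => hSsub (mem_range_self k)) hSdense hμA hI (η := η) hη
  exact ⟨ν, hν, wb_lt_of_wbPow_lt hp₀ (hle.trans_lt (by simpa using hηε))⟩

theorem wb_space_separable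
    {X : Type*} [MetricSpace X] [CompleteSpace X] [TopologicalSpace.SeparableSpace X]
    [ProperSpace X] [MeasurableSpace X] [BorelSpace X]
    (A : Set X) (hA : IsClosed A) (hne : A.Nonempty)
    (p : ℝ) (hp : 1 ≤ p)
    (S : Set X) (hScount : S.Countable) (hSsub : S ⊆ Aᶜ) (hSdense : Aᶜ ⊆ closure S) :
    ∀ μ : Measure X, MemMp p A μ → ∀ ε : ℝ≥0∞, 0 < ε →
      ∃ ν : Measure X,
        (∃ (n : ℕ) (q : Fin n → ℚ) (x : Fin n → X),
          (∀ i, 0 < q i) ∧ (∀ i, x i ∈ S) ∧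
          ν = ∑ i, ENNReal.ofReal (q i : ℝ) • Measure.dirac (x i)) ∧
        Wb p A μ ν < ε :=
  wb_space_separable_general A hA hne p hp S hScount hSsub hSdense
end

section
/- Let X be a complete, separable, proper, geodesic metric space. Then there exists a Borel measurable map GeoSel : X × X → Geo(X) (the space of constant speed geodesics ξ : [0,1] → X with the uniform metric) such that for all (x,y), GeoSel(x,y)(0) = x and GeoSel(x,y)(1) = y. -/
/-!
A geodesic from `x` to `y` passes through a midpoint of `x` and `y`. The midpoint relation is
closed, and since `X` is proper its hitting sets `{(x, y) | some midpoint lies in a closed ball}`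
are closed, so a Kuratowski–Ryll-Nardzewski argument selects a Borel midpoint map `m`.
Iterating `m` on dyadic subdivisions places points at the dyadic parameters `j / 2 ^ n` with
`d(γ(j / 2 ^ n), γ(l / 2 ^ k)) = |j / 2 ^ n - l / 2 ^ k| d(x, y)`; their limits along
`⌊t 2 ^ n⌋ / 2 ^ n` form a constant speed geodesic whose evaluations, hence the geodesic itself
as a point of `C([0, 1], X)`, depend measurably on `(x, y)`.
-/

open Filter Function Metric Set Topology unitInterval

section MeasurableSelection

variable {α : Type*} [MeasurableSpace α]

theorem exists_measurable_nat_chain (P : ℕ → α → ℕ → Prop) (R : ℕ → ℕ → ℕ → Prop)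
    (hP : ∀ k i, MeasurableSet {a | P k a i}) (h₀ : ∀ a, ∃ i, P 0 a i)
    (hstep : ∀ k a j, P k a j → ∃ i, P (k + 1) a i ∧ R k j i) :
    ∃ ι : ℕ → α → ℕ, (∀ k, Measurable (ι k)) ∧
      ∀ k a, P k a (ι k a) ∧ R k (ι k a) (ι (k + 1) a) := by
  classical
  let G (a : α) (k : ℕ) : {i // P k a i} := Nat.rec ⟨Nat.find (h₀ a), Nat.find_spec (h₀ a)⟩
    (fun k i => ⟨Nat.find (hstep k a i.1 i.2), (Nat.find_spec (hstep k a i.1 i.2)).1⟩) k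
  refine ⟨fun k a => (G a k).1, fun k => ?_,
    fun k a => ⟨(G a k).2, (Nat.find_spec (hstep k a _ (G a k).2)).2⟩⟩
  induction k with
  | zero => exact measurable_find h₀ (hP 0)
  | succ k ih =>
    exact measurable_find (fun a => hstep k a _ (G a k).2)
      fun i => (hP (k + 1) i).inter (ih (MeasurableSet.of_discrete (s := {j | R k j i})))

theorem exists_measurable_forall_mem {X : Type*} [MetricSpace X] [CompleteSpace X]
    [TopologicalSpace.SeparableSpace X] [MeasurableSpace X] [BorelSpace X] {F : α → Set X}
    (hF_closed : ∀ a, IsClosed (F a)) (hF_ne : ∀ a, (F a).Nonempty)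
    (hF_meas : ∀ x r, MeasurableSet {a | (F a ∩ closedBall x r).Nonempty}) :
    ∃ f : α → X, Measurable f ∧ ∀ a, f a ∈ F a := by
  rcases isEmpty_or_nonempty α with hα | ⟨⟨a₀⟩⟩
  · exact ⟨isEmptyElim, Subsingleton.measurable, isEmptyElim⟩
  have : Nonempty X := ⟨(hF_ne a₀).some⟩
  set q := TopologicalSpace.denseSeq X
  have hq (z : X) (k : ℕ) : ∃ i, dist z (q i) < (1 / 2) ^ k :=
    Metric.denseRange_iff.1 (TopologicalSpace.denseRange_denseSeq X) z _ (by positivity)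
  obtain ⟨ι, hι_meas, hι⟩ := exists_measurable_nat_chain
    (fun k a i => (F a ∩ closedBall (q i) ((1 / 2) ^ k)).Nonempty)
    (fun k j i => dist (q j) (q i) ≤ 2 * (1 / 2) ^ k) (fun k i => hF_meas _ _)
    (fun a => by
      obtain ⟨z, hz⟩ := hF_ne a
      obtain ⟨i, hi⟩ := hq z 0
      exact ⟨i, z, hz, hi.le⟩)
    (fun k a j ⟨z, hz, hzj⟩ => by
      obtain ⟨i, hi⟩ := hq z (k + 1)
      refine ⟨i, ⟨z, hz, hi.le⟩, ?_⟩
      calc dist (q j) (q i) ≤ dist z (q j) + dist z (q i) := dist_triangle_left _ _ _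
        _ ≤ (1 / 2) ^ k + (1 / 2) ^ (k + 1) := add_le_add hzj hi.le
        _ ≤ 2 * (1 / 2) ^ k := by
          rw [pow_succ]; linarith [pow_nonneg (by norm_num : (0 : ℝ) ≤ 1 / 2) k])
  choose f hf using fun a => cauchySeq_tendsto_of_complete <|
    cauchySeq_of_le_geometric (1 / 2) 2 (by norm_num) fun k => (hι k a).2
  refine ⟨f, measurable_of_tendsto_metrizable (fun k => measurable_from_nat.comp (hι_meas k))
    (tendsto_pi_nhds.2 hf), fun a => ?_⟩
  choose z hzF hzq using fun k => (hι k a).1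
  refine (hF_closed a).mem_of_tendsto ((hf a).congr_dist ?_) (Eventually.of_forall hzF)
  refine squeeze_zero (fun _ => dist_nonneg) (fun k => ?_) (tendsto_pow_atTop_nhds_zero_of_lt_one
    (by norm_num : (0 : ℝ) ≤ 1 / 2) (by norm_num))
  exact dist_comm (z k) _ ▸ hzq k

theorem isClosed_setOf_exists_mem_isCompact {β Y : Type*} [TopologicalSpace β]
    [TopologicalSpace Y] {S : Set (β × Y)} (hS : IsClosed S) {K : Set Y} (hK : IsCompact K) :
    IsClosed {b | ∃ y, (b, y) ∈ S ∧ y ∈ K} := by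
  have : CompactSpace K := isCompact_iff_compactSpace.1 hK
  have hproj :
      {b | ∃ y, (b, y) ∈ S ∧ y ∈ K} = Prod.fst '' {p : β × K | (p.1, (p.2 : Y)) ∈ S} := by
    ext b
    simp [and_comm]
  rw [hproj]
  exact isClosedMap_fst_of_compactSpace _ (hS.preimage (by fun_prop))

theorem exists_measurable_forall_mem_of_isClosed {β X : Type*} [TopologicalSpace β]
    [MeasurableSpace β] [OpensMeasurableSpace β] [MetricSpace X] [ProperSpace X]
    [MeasurableSpace X] [BorelSpace X] {S : Set (β × X)} (hS : IsClosed S)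
    (hne : ∀ b, ∃ x, (b, x) ∈ S) : ∃ f : β → X, Measurable f ∧ ∀ b, (b, f b) ∈ S :=
  exists_measurable_forall_mem (F := fun b => {x | (b, x) ∈ S})
    (fun _ => hS.preimage (by fun_prop)) hne
    fun x r => (isClosed_setOf_exists_mem_isCompact hS (isCompact_closedBall x r)).measurableSet

end MeasurableSelection

section Midpoint

variable {X : Type*} [MetricSpace X]

def IsMetricMidpointMap (m : X → X → X) : Prop :=
  ∀ x y, dist x (m x y) = dist x y / 2 ∧ dist (m x y) y = dist x y / 2

theorem exists_measurable_isMetricMidpointMap [ProperSpace X] [MeasurableSpace X] [BorelSpace X]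
    (h : ∀ x y : X, ∃ z, dist x z = dist x y / 2 ∧ dist z y = dist x y / 2) :
    ∃ m : X → X → X, Measurable (uncurry m) ∧ IsMetricMidpointMap m := by
  obtain ⟨f, hf, hfS⟩ := exists_measurable_forall_mem_of_isClosed
    (S := {q : (X × X) × X | dist q.1.1 q.2 = dist q.1.1 q.1.2 / 2 ∧
      dist q.2 q.1.2 = dist q.1.1 q.1.2 / 2})
    ((isClosed_eq (by fun_prop) (by fun_prop)).inter (isClosed_eq (by fun_prop) (by fun_prop)))
    fun p => h p.1 p.2
  exact ⟨curry f, hf, fun x y => hfS (x, y)⟩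

end Midpoint

theorem dist_eq_of_dist_succ_eq {X : Type*} [PseudoMetricSpace X] {z : ℕ → X} {N : ℕ} {c : ℝ}
    (hstep : ∀ j < N, dist (z j) (z (j + 1)) = c) (hend : N * c ≤ dist (z 0) (z N))
    {j l : ℕ} (hjl : j ≤ l) (hl : l ≤ N) : dist (z j) (z l) = (l - j) * c := by
  have upper {j l : ℕ} (hjl : j ≤ l) (hl : l ≤ N) : dist (z j) (z l) ≤ (l - j) * c :=
    calc dist (z j) (z l) ≤ ∑ i ∈ Finset.Ico j l, dist (z i) (z (i + 1)) :=
          dist_le_Ico_sum_dist z hjl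
      _ = ∑ i ∈ Finset.Ico j l, c :=
          Finset.sum_congr rfl fun i hi => hstep i (by rw [Finset.mem_Ico] at hi; omega)
      _ = (l - j) * c := by simp [Nat.cast_sub hjl]
  have h₀ := upper (Nat.zero_le j) (hjl.trans hl)
  have h₁ := upper hl le_rfl
  have := dist_triangle4 (z 0) (z j) (z l) (z N)
  push_cast at h₀
  exact le_antisymm (upper hjl hl) (by linarith)

section Dyadic

variable {X : Type*} (m : X → X → X) (x y : X)

/-- `dyadicPoint m x y n j` is the point at parameter `j / 2 ^ n` on the curve from `x` to `y`
obtained by repeatedly inserting `m`-midpoints. -/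
def dyadicPoint : ℕ → ℕ → X
  | 0, j => if j = 0 then x else y
  | n + 1, j =>
    if Even j then dyadicPoint n (j / 2) else m (dyadicPoint n (j / 2)) (dyadicPoint n (j / 2 + 1))

theorem dyadicPoint_succ_two_mul (n i : ℕ) :
    dyadicPoint m x y (n + 1) (2 * i) = dyadicPoint m x y n i := by
  simp [dyadicPoint]

theorem dyadicPoint_succ_two_mul_add_one (n i : ℕ) :
    dyadicPoint m x y (n + 1) (2 * i + 1) =
      m (dyadicPoint m x y n i) (dyadicPoint m x y n (i + 1)) := by
  simp [dyadicPoint, Nat.not_even_bit1, show (2 * i + 1) / 2 = i by omega]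

theorem dyadicPoint_mul_two_pow (n k j : ℕ) :
    dyadicPoint m x y (n + k) (j * 2 ^ k) = dyadicPoint m x y n j := by
  induction k with
  | zero => simp
  | succ k ih =>
    rw [← ih, ← add_assoc, pow_succ', mul_left_comm, dyadicPoint_succ_two_mul]

theorem dyadicPoint_zero_right (n : ℕ) : dyadicPoint m x y n 0 = x := by
  simpa [dyadicPoint] using dyadicPoint_mul_two_pow m x y 0 n 0

theorem dyadicPoint_two_pow (n : ℕ) : dyadicPoint m x y n (2 ^ n) = y := by
  simpa [dyadicPoint] using dyadicPoint_mul_two_pow m x y 0 n 1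

variable {m}

theorem measurable_dyadicPoint [MeasurableSpace X] (hm : Measurable (uncurry m))
    (n j : ℕ) : Measurable fun p : X × X => dyadicPoint m p.1 p.2 n j := by
  induction n generalizing j with
  | zero => by_cases hj : j = 0 <;> simp [dyadicPoint, hj, measurable_fst, measurable_snd]
  | succ n ih =>
    rcases Nat.even_or_odd' j with ⟨i, rfl | rfl⟩
    · simpa only [dyadicPoint_succ_two_mul] using ih i
    · simp only [dyadicPoint_succ_two_mul_add_one]
      exact hm.comp ((ih i).prodMk (ih (i + 1)))

variable [MetricSpace X]

theorem dist_dyadicPoint_succ (hm : IsMetricMidpointMap m) (n j : ℕ) (hj : j < 2 ^ n) :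
    dist (dyadicPoint m x y n j) (dyadicPoint m x y n (j + 1)) = dist x y / 2 ^ n := by
  induction n generalizing j with
  | zero => simp_all [dyadicPoint]
  | succ n ih =>
    rcases Nat.even_or_odd' j with ⟨i, rfl | rfl⟩
    · rw [dyadicPoint_succ_two_mul, dyadicPoint_succ_two_mul_add_one, (hm _ _).1,
        ih i (by omega), pow_succ, div_div]
    · rw [show 2 * i + 1 + 1 = 2 * (i + 1) by ring, dyadicPoint_succ_two_mul,
        dyadicPoint_succ_two_mul_add_one, (hm _ _).2, ih i (by omega), pow_succ, div_div]

theorem dist_dyadicPoint_same_level (hm : IsMetricMidpointMap m) {n j l : ℕ} (hj : j ≤ 2 ^ n)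
    (hl : l ≤ 2 ^ n) :
    dist (dyadicPoint m x y n j) (dyadicPoint m x y n l) =
      |(j : ℝ) / 2 ^ n - l / 2 ^ n| * dist x y := by
  wlog hjl : j ≤ l generalizing j l
  · rw [dist_comm, abs_sub_comm, this hl hj (by omega)]
  have hend : ((2 ^ n : ℕ) : ℝ) * (dist x y / 2 ^ n) ≤
      dist (dyadicPoint m x y n 0) (dyadicPoint m x y n (2 ^ n)) := by
    rw [dyadicPoint_zero_right, dyadicPoint_two_pow]
    push_cast
    exact le_of_eq (by field_simp)
  rw [dist_eq_of_dist_succ_eq (dist_dyadicPoint_succ x y hm n) hend hjl hl,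
    abs_of_nonpos (sub_nonpos.2 (by gcongr))]
  ring

theorem dist_dyadicPoint (hm : IsMetricMidpointMap m) {n n' j l : ℕ} (hj : j ≤ 2 ^ n)
    (hl : l ≤ 2 ^ n') :
    dist (dyadicPoint m x y n j) (dyadicPoint m x y n' l) =
      |(j : ℝ) / 2 ^ n - l / 2 ^ n'| * dist x y := by
  wlog hn : n ≤ n' generalizing n n' j l
  · rw [dist_comm, abs_sub_comm, this hl hj (by omega)]
  obtain ⟨k, rfl⟩ := Nat.exists_eq_add_of_le hn
  have hj' : j * 2 ^ k ≤ 2 ^ (n + k) := by rw [pow_add]; gcongr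
  rw [← dyadicPoint_mul_two_pow m x y n k j, dist_dyadicPoint_same_level x y hm hj' hl]
  congr 3
  rw [pow_add]
  push_cast
  field_simp

end Dyadic

theorem ContinuousMap.measurable_of_measurable_eval {α K X : Type*} [MeasurableSpace α]
    [TopologicalSpace K] [CompactSpace K] [TopologicalSpace.MetrizableSpace K]
    [MetricSpace X] [CompleteSpace X] [SecondCountableTopology X] [MeasurableSpace X]
    [BorelSpace X] [MeasurableSpace C(K, X)] [BorelSpace C(K, X)] {f : α → C(K, X)}
    (hf : ∀ t, Measurable fun a => f a t) : Measurable f := by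
  obtain ⟨s, hs_count, hs_dense⟩ := TopologicalSpace.exists_countable_dense K
  have : Countable s := hs_count.to_subtype
  have hrestrict : MeasurableEmbedding fun (g : C(K, X)) (t : s) => g t :=
    Continuous.measurableEmbedding (continuous_pi fun t => continuous_eval_const _)
      fun g h hgh => ContinuousMap.coe_injective <|
        Continuous.ext_on hs_dense g.continuous h.continuous fun t ht => congrFun hgh ⟨t, ht⟩
  exact hrestrict.measurable_comp_iff.1 (measurable_pi_iff.2 fun t => hf t)

section Geodesic

variable {X : Type*} [MetricSpace X] {m : X → X → X}

theorem tendsto_floor_mul_two_pow_div {t : ℝ} (ht : 0 ≤ t) :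
    Tendsto (fun n : ℕ => (⌊t * 2 ^ n⌋₊ : ℝ) / 2 ^ n) atTop (𝓝 t) :=
  (tendsto_nat_floor_mul_div_atTop ht).comp (tendsto_pow_atTop_atTop_of_one_lt one_lt_two)

theorem floor_mul_two_pow_le (t : I) (n : ℕ) : ⌊(t : ℝ) * 2 ^ n⌋₊ ≤ 2 ^ n :=
  Nat.floor_le_of_le (by push_cast; exact mul_le_of_le_one_left (by positivity) t.2.2)

variable (m) (x y : X)

noncomputable def midpointGeodesic (t : I) : X :=
  have : Nonempty X := ⟨x⟩
  limUnder atTop fun n => dyadicPoint m x y n ⌊(t : ℝ) * 2 ^ n⌋₊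

variable {m}

theorem dist_dyadicPoint_floor (hm : IsMetricMidpointMap m) (n n' : ℕ) (s t : I) :
    dist (dyadicPoint m x y n ⌊(s : ℝ) * 2 ^ n⌋₊) (dyadicPoint m x y n' ⌊(t : ℝ) * 2 ^ n'⌋₊) =
      dist ((⌊(s : ℝ) * 2 ^ n⌋₊ : ℝ) / 2 ^ n) ((⌊(t : ℝ) * 2 ^ n'⌋₊ : ℝ) / 2 ^ n') * dist x y :=
  dist_dyadicPoint x y hm (floor_mul_two_pow_le s n) (floor_mul_two_pow_le t n')

variable [CompleteSpace X]

theorem tendsto_midpointGeodesic (hm : IsMetricMidpointMap m) (t : I) :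
    Tendsto (fun n => dyadicPoint m x y n ⌊(t : ℝ) * 2 ^ n⌋₊) atTop
      (𝓝 (midpointGeodesic m x y t)) := by
  refine CauchySeq.tendsto_limUnder (cauchySeq_iff_tendsto_dist_atTop_0.2 ?_)
  simp_rw [dist_dyadicPoint_floor x y hm]
  simpa using (cauchySeq_iff_tendsto_dist_atTop_0.1
    (tendsto_floor_mul_two_pow_div t.2.1).cauchySeq).mul_const (dist x y)

theorem dist_midpointGeodesic (hm : IsMetricMidpointMap m) (s t : I) :
    dist (midpointGeodesic m x y s) (midpointGeodesic m x y t) = |(s : ℝ) - t| * dist x y := by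
  refine tendsto_nhds_unique ((tendsto_midpointGeodesic x y hm s).dist
    (tendsto_midpointGeodesic x y hm t)) ?_
  simp_rw [dist_dyadicPoint_floor x y hm, ← Real.dist_eq]
  exact ((tendsto_floor_mul_two_pow_div s.2.1).dist
    (tendsto_floor_mul_two_pow_div t.2.1)).mul_const _

theorem midpointGeodesic_zero (hm : IsMetricMidpointMap m) : midpointGeodesic m x y 0 = x :=
  tendsto_nhds_unique (tendsto_midpointGeodesic x y hm 0) (by simp [dyadicPoint_zero_right])

theorem midpointGeodesic_one (hm : IsMetricMidpointMap m) : midpointGeodesic m x y 1 = y :=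
  tendsto_nhds_unique (tendsto_midpointGeodesic x y hm 1) (by
    have (n : ℕ) : ⌊(2 : ℝ) ^ n⌋₊ = 2 ^ n := by exact_mod_cast Nat.floor_natCast (R := ℝ) (2 ^ n)
    simp [this, dyadicPoint_two_pow])

theorem continuous_midpointGeodesic (hm : IsMetricMidpointMap m) :
    Continuous (midpointGeodesic m x y) :=
  LipschitzWith.continuous (K := nndist x y) <| LipschitzWith.of_dist_le_mul fun s t => by
    rw [dist_midpointGeodesic x y hm, Subtype.dist_eq, Real.dist_eq, coe_nndist, mul_comm]

theorem measurable_midpointGeodesic [MeasurableSpace X] [BorelSpace X]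
    (hm : IsMetricMidpointMap m) (hm_meas : Measurable (uncurry m)) (t : I) :
    Measurable fun p : X × X => midpointGeodesic m p.1 p.2 t :=
  measurable_of_tendsto_metrizable (fun n => measurable_dyadicPoint hm_meas n _)
    (tendsto_pi_nhds.2 fun p => tendsto_midpointGeodesic p.1 p.2 hm t)

end Geodesic

theorem exists_measurable_geodesic_selection_general
    {X : Type*} [MetricSpace X] [ProperSpace X] [MeasurableSpace X] [BorelSpace X]
    (hgeodesic : ∀ x y : X, ∃ ξ : C(unitInterval, X), ξ 0 = x ∧ ξ 1 = y ∧
      ∀ s t : unitInterval, dist (ξ s) (ξ t) = |(s : ℝ) - (t : ℝ)| * dist x y) :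
    ∃ GeoSel : X × X → C(unitInterval, X),
      @Measurable (X × X) C(unitInterval, X) _ (borel _) GeoSel ∧
      ∀ x y : X, GeoSel (x, y) 0 = x ∧ GeoSel (x, y) 1 = y ∧
        ∀ s t : unitInterval,
          dist (GeoSel (x, y) s) (GeoSel (x, y) t) = |(s : ℝ) - (t : ℝ)| * dist x y := by
  have hmid (x y : X) : ∃ z, dist x z = dist x y / 2 ∧ dist z y = dist x y / 2 := by
    obtain ⟨ξ, h₀, h₁, hξ⟩ := hgeodesic x y
    let half : I := ⟨1 / 2, by norm_num, by norm_num⟩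
    refine ⟨ξ half, ?_, ?_⟩
    · rw [← h₀, hξ 0 half, h₀]; norm_num [half]; ring
    · rw [← h₁, hξ half 1, h₁]; norm_num [half]; ring
  obtain ⟨m, hm_meas, hm⟩ := exists_measurable_isMetricMidpointMap hmid
  let : MeasurableSpace C(I, X) := borel _
  have : BorelSpace C(I, X) := ⟨rfl⟩
  refine ⟨fun p => ⟨midpointGeodesic m p.1 p.2, continuous_midpointGeodesic p.1 p.2 hm⟩,
    ContinuousMap.measurable_of_measurable_eval (measurable_midpointGeodesic hm hm_meas),
    fun x y => ⟨midpointGeodesic_zero x y hm, midpointGeodesic_one x y hm,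
      dist_midpointGeodesic x y hm⟩⟩

theorem exists_measurable_geodesic_selection
    {X : Type*} [MetricSpace X] [CompleteSpace X] [TopologicalSpace.SeparableSpace X]
    [ProperSpace X] [MeasurableSpace X] [BorelSpace X]
    (hgeodesic : ∀ x y : X, ∃ ξ : C(unitInterval, X), ξ 0 = x ∧ ξ 1 = y ∧
      ∀ s t : unitInterval, dist (ξ s) (ξ t) = |(s : ℝ) - (t : ℝ)| * dist x y) :
    ∃ GeoSel : X × X → C(unitInterval, X),
      @Measurable (X × X) C(unitInterval, X) _ (borel _) GeoSel ∧
      ∀ x y : X, GeoSel (x, y) 0 = x ∧ GeoSel (x, y) 1 = y ∧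
        ∀ s t : unitInterval,
          dist (GeoSel (x, y) s) (GeoSel (x, y) t) = |(s : ℝ) - (t : ℝ)| * dist x y :=
  exists_measurable_geodesic_selection_general hgeodesic
end

section
/- Let (X,A) be a metric pair with X complete, separable, proper and geodesic, p ∈ [1,∞), and μ⁰, μ¹ ∈ M_p(X,A). Let γ ∈ Opt(μ⁰,μ¹) and let 𝛄 = GeoSel_# γ be the push-forward of γ under a measurable geodesic selection. Define μ_t = (e_t)_# 𝛄 restricted to Ω for t ∈ [0,1], where e_t is evaluation at time t. Then μ_0 = μ⁰, μ_1 = μ¹, each μ_t ∈ M_p(X,A), and for all s,t ∈ [0,1], Wb_p(μ_s,μ_t) ≤ |s−t| · Wb_p(μ_0,μ_1); consequently (μ_t) is a constant speed geodesic in (M_p(X,A), Wb_p) and M_p(X,A) is a geodesic space. -/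
/-!
The map `(e_s, e_t) ∘ GeoSel`, pushed forward by `γ` and restricted to the complement of `A × A`,
is an admissible plan between the time-`s` and time-`t` marginals; as the selected geodesics
have constant speed, its cost is `|s - t| ^ p` times the cost of `γ`, which is optimal.

That the marginals lie in `M_p` needs the cost of `γ` to be finite. It is: sending `μ₀` into `A`
and drawing `μ₁` from `A` along a measurable map `f` with `d(x, f x) ≤ 2 d(x, A)` (picked from a
countable dense subset of `A`, so no nearest point is needed) costs at most `2 ^ p` times the
`p`-moments. Then `d(x_t, A) ≤ d(x_0, A) + d(x_0, x_1)` bounds the moment of `μ_t`, and a geodesic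
passing through `B(x, 1)` is either long, which the cost controls, or has an endpoint outside `A`
in `B(x, 2)`, which the local finiteness of `μ₀` and `μ₁` controls.
-/

open MeasureTheory Metric Set ENNReal Filter

section Plans

variable {X : Type*} [MeasurableSpace X] {A : Set X}

theorem measure_fst_preimage_inter_compl_of_mem_ptAdm {γ : Measure (X × X)} {μ ν : Measure X}
    (hγ : γ ∈ ptAdm A μ ν) (hA : MeasurableSet A) {S : Set X} (hS : MeasurableSet S) :
    γ (Prod.fst ⁻¹' (S ∩ Aᶜ)) = μ S := by
  rw [← hγ.2.1, Measure.restrict_apply hS, Measure.map_apply measurable_fst (hS.inter hA.compl)]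

theorem measure_snd_preimage_inter_compl_of_mem_ptAdm {γ : Measure (X × X)} {μ ν : Measure X}
    (hγ : γ ∈ ptAdm A μ ν) (hA : MeasurableSet A) {S : Set X} (hS : MeasurableSet S) :
    γ (Prod.snd ⁻¹' (S ∩ Aᶜ)) = ν S := by
  rw [← hγ.2.2, Measure.restrict_apply hS, Measure.map_apply measurable_snd (hS.inter hA.compl)]

theorem map_restrict_compl_prod_restrict_compl {π : Measure (X × X)} {g : X × X → X}
    (hg : Measurable g) (hA : MeasurableSet A) (hgA : g ⁻¹' Aᶜ ⊆ (A ×ˢ A)ᶜ) :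
    ((π.restrict (A ×ˢ A)ᶜ).map g).restrict Aᶜ = (π.map g).restrict Aᶜ := by
  rw [Measure.restrict_map hg hA.compl, Measure.restrict_map hg hA.compl,
    Measure.restrict_restrict (hg hA.compl), inter_eq_left.2 hgA]

theorem map_prod_restrict_mem_ptAdm {Y : Type*} [MeasurableSpace Y] (γ : Measure Y)
    {F G : Y → X} (hF : Measurable F) (hG : Measurable G) (hA : MeasurableSet A) :
    (γ.map fun y => (F y, G y)).restrict (A ×ˢ A)ᶜ ∈
      ptAdm A ((γ.map F).restrict Aᶜ) ((γ.map G).restrict Aᶜ) := by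
  have hFG : Measurable fun y => (F y, G y) := hF.prodMk hG
  refine ⟨by simp [Measure.restrict_apply (hA.prod hA)], ?_, ?_⟩
  · rw [map_restrict_compl_prod_restrict_compl measurable_fst hA fun z hz hzA => hz hzA.1,
      Measure.map_map measurable_fst hFG]
    rfl
  · rw [map_restrict_compl_prod_restrict_compl measurable_snd hA fun z hz hzA => hz hzA.2,
      Measure.map_map measurable_snd hFG]
    rfl

theorem lintegral_comp_eq_lintegral_map_restrict_compl {Y : Type*} [MeasurableSpace Y]
    (γ : Measure Y) {g : Y → X} (hg : Measurable g) {f : X → ℝ≥0∞} (hf : Measurable f)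
    (hfA : ∀ x ∈ A, f x = 0) :
    ∫⁻ y, f (g y) ∂γ = ∫⁻ x, f x ∂(γ.map g).restrict Aᶜ := by
  rw [setLIntegral_eq_of_support_subset (s := Aᶜ) fun x hx hxA => hx (hfA x hxA),
    lintegral_map hf hg]

theorem map_graph_add_map_graph_mem_ptAdm {μ₀ μ₁ : Measure X} {f : X → X} (hf : Measurable f)
    (hfA : ∀ x, f x ∈ A) (hA : MeasurableSet A) (h₀ : μ₀ A = 0) (h₁ : μ₁ A = 0) :
    μ₀.map (fun x => (x, f x)) + μ₁.map (fun x => (f x, x)) ∈ ptAdm A μ₀ μ₁ := by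
  have hgraph₀ : Measurable fun x => (x, f x) := measurable_id.prodMk hf
  have hgraph₁ : Measurable fun x => (f x, x) := hf.prodMk measurable_id
  have hself : ∀ μ : Measure X, μ A = 0 → μ.restrict Aᶜ = μ := fun μ hμ =>
    Measure.restrict_eq_self_of_ae_mem (compl_mem_ae_iff.2 hμ)
  have hinto : ∀ μ : Measure X, (μ.map f).restrict Aᶜ = 0 := fun μ => by
    rw [Measure.restrict_eq_zero, Measure.map_apply hf hA.compl]
    exact measure_mono_null (fun x hx => hx (hfA x)) measure_empty
  refine ⟨?_, ?_, ?_⟩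
  · rw [Measure.add_apply, Measure.map_apply hgraph₀ (hA.prod hA),
      Measure.map_apply hgraph₁ (hA.prod hA)]
    exact add_eq_zero.2 ⟨measure_mono_null (fun x hx => hx.1) h₀,
      measure_mono_null (fun x hx => hx.2) h₁⟩
  · rw [Measure.map_add _ _ measurable_fst, Measure.map_map measurable_fst hgraph₀,
      Measure.map_map measurable_fst hgraph₁, Measure.restrict_add]
    simp only [Function.comp_def, Measure.map_id', hself μ₀ h₀, hinto, add_zero]
  · rw [Measure.map_add _ _ measurable_snd, Measure.map_map measurable_snd hgraph₀,
      Measure.map_map measurable_snd hgraph₁, Measure.restrict_add]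
    simp only [Function.comp_def, Measure.map_id', hself μ₁ h₁, hinto, zero_add]

end Plans

theorem ENNReal.ofReal_add_rpow_le {a b p : ℝ} (ha : 0 ≤ a) (hb : 0 ≤ b) (hp : 1 ≤ p) :
    ENNReal.ofReal ((a + b) ^ p) ≤
      2 ^ (p - 1) * (ENNReal.ofReal (a ^ p) + ENNReal.ofReal (b ^ p)) := by
  have hp₀ : 0 ≤ p := zero_le_one.trans hp
  rw [← ofReal_rpow_of_nonneg (add_nonneg ha hb) hp₀, ofReal_add ha hb,
    ← ofReal_rpow_of_nonneg ha hp₀, ← ofReal_rpow_of_nonneg hb hp₀]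
  exact ENNReal.rpow_add_le_mul_rpow_add_rpow _ _ hp

theorem ENNReal.ofReal_rpow_le_ofReal_rpow_mul {a b c p : ℝ} (ha : 0 ≤ a) (hb : 0 ≤ b)
    (hc : 0 ≤ c) (hp : 0 ≤ p) (h : a ≤ c * b) :
    ENNReal.ofReal (a ^ p) ≤ ENNReal.ofReal (c ^ p) * ENNReal.ofReal (b ^ p) := by
  rw [← ofReal_mul (by positivity), ← Real.mul_rpow hc hb]
  exact ofReal_le_ofReal (Real.rpow_le_rpow ha h hp)

theorem Wb_le_ofReal_mul_of_WbPow_le {X : Type*} [PseudoMetricSpace X] [MeasurableSpace X]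
    {A : Set X} {μ ν μ' ν' : Measure X} {c p : ℝ} (hc : 0 ≤ c) (hp : 0 < p)
    (h : WbPow p A μ ν ≤ ENNReal.ofReal (c ^ p) * WbPow p A μ' ν') :
    Wb p A μ ν ≤ ENNReal.ofReal c * Wb p A μ' ν' := by
  calc WbPow p A μ ν ^ (1 / p) ≤ (ENNReal.ofReal (c ^ p) * WbPow p A μ' ν') ^ (1 / p) :=
        ENNReal.rpow_le_rpow h (by positivity)
    _ = ENNReal.ofReal c * Wb p A μ' ν' := by
        rw [ENNReal.mul_rpow_of_nonneg _ _ (by positivity), ← ofReal_rpow_of_nonneg hc hp.le,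
          ← ENNReal.rpow_mul, mul_one_div_cancel hp.ne', ENNReal.rpow_one, Wb]

section Metric

variable {X : Type*} [PseudoMetricSpace X] [MeasurableSpace X] {A : Set X} {p : ℝ}
  {μ₀ μ₁ : Measure X} {γ : Measure (X × X)} {F : X × X → X}

theorem ptCost_map_prod_restrict_le (s : Set (X × X)) {G : X × X → X} {c : ℝ} (hc : 0 ≤ c)
    (hp : 0 ≤ p) (hFG : ∀ z, dist (F z) (G z) ≤ c * dist z.1 z.2) :
    ptCost p ((γ.map fun z => (F z, G z)).restrict s) ≤ ENNReal.ofReal (c ^ p) * ptCost p γ :=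
  calc ptCost p ((γ.map fun z => (F z, G z)).restrict s)
      ≤ ptCost p (γ.map fun z => (F z, G z)) := lintegral_mono' Measure.restrict_le_self le_rfl
    _ ≤ ∫⁻ z, ENNReal.ofReal (dist (F z) (G z) ^ p) ∂γ := lintegral_map_le _ _
    _ ≤ ∫⁻ z, ENNReal.ofReal (c ^ p) * ENNReal.ofReal (dist z.1 z.2 ^ p) ∂γ :=
        lintegral_mono fun z =>
          ENNReal.ofReal_rpow_le_ofReal_rpow_mul dist_nonneg dist_nonneg hc hp (hFG z)
    _ = ENNReal.ofReal (c ^ p) * ptCost p γ := lintegral_const_mul' _ _ ofReal_ne_top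

variable [OpensMeasurableSpace X]

theorem lintegral_infDist_rpow_map_restrict_compl_ne_top (hγ : γ ∈ ptAdm A μ₀ μ₁) (hp : 1 ≤ p)
    (h₀ : ∫⁻ x, ENNReal.ofReal (infDist x A ^ p) ∂μ₀ ≠ ⊤) (hcost : ptCost p γ ≠ ⊤)
    (hF₁ : ∀ z, dist (F z) z.1 ≤ dist z.1 z.2) :
    ∫⁻ x, ENNReal.ofReal (infDist x A ^ p) ∂(γ.map F).restrict Aᶜ ≠ ⊤ := by
  have hfst : ∫⁻ z, ENNReal.ofReal (infDist z.1 A ^ p) ∂γ =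
      ∫⁻ x, ENNReal.ofReal (infDist x A ^ p) ∂μ₀ := by
    rw [← hγ.2.1]
    exact lintegral_comp_eq_lintegral_map_restrict_compl γ measurable_fst
      (by fun_prop : Measurable fun x : X => ENNReal.ofReal (infDist x A ^ p))
      fun x hx => by simp [infDist_zero_of_mem hx, Real.zero_rpow (by linarith : p ≠ 0)]
  have hpoint : ∀ z, ENNReal.ofReal (infDist (F z) A ^ p) ≤
      2 ^ (p - 1) * (ENNReal.ofReal (infDist z.1 A ^ p) + ENNReal.ofReal (dist z.1 z.2 ^ p)) :=
    fun z =>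
      have hdist : infDist (F z) A ≤ infDist z.1 A + dist z.1 z.2 :=
        (infDist_le_infDist_add_dist (y := z.1)).trans (add_le_add le_rfl (hF₁ z))
      (ofReal_le_ofReal (Real.rpow_le_rpow infDist_nonneg hdist (by linarith))).trans
        (ENNReal.ofReal_add_rpow_le infDist_nonneg dist_nonneg hp)
  refine ne_top_of_le_ne_top ?_ ((lintegral_mono' Measure.restrict_le_self le_rfl).trans
    ((lintegral_map_le _ _).trans (lintegral_mono hpoint)))
  rw [lintegral_const_mul' _ _ (rpow_ne_top_of_nonneg (by linarith) ofNat_ne_top),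
    lintegral_add_left (by fun_prop), hfst]
  exact mul_ne_top (rpow_ne_top_of_nonneg (by linarith) ofNat_ne_top) (add_ne_top.2 ⟨h₀, hcost⟩)

variable [TopologicalSpace.SeparableSpace X]

theorem exists_measurable_dist_le_two_mul_infDist (hA : IsClosed A) (hne : A.Nonempty) :
    ∃ f : X → X, Measurable f ∧ (∀ x, f x ∈ A) ∧ ∀ x, dist x (f x) ≤ 2 * infDist x A := by
  classical
  have : Nonempty A := hne.to_subtype
  obtain ⟨u, hu⟩ := TopologicalSpace.exists_dense_seq A
  have hex : ∀ x, ∃ n, x ∈ A ∨ dist x (u n) < 2 * infDist x A := by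
    intro x
    by_cases hx : x ∈ A
    · exact ⟨0, Or.inl hx⟩
    have hpos : 0 < infDist x A := (hA.notMem_iff_infDist_pos hne).1 hx
    obtain ⟨y, hyA, hy⟩ := (infDist_lt_iff hne).1 (by linarith : infDist x A < 3 / 2 * infDist x A)
    obtain ⟨n, hn⟩ := hu.exists_dist_lt (⟨y, hyA⟩ : A) (half_pos hpos)
    refine ⟨n, Or.inr ?_⟩
    calc dist x (u n) ≤ dist x y + dist y (u n) := dist_triangle _ _ _
      _ < 2 * infDist x A := by rw [Subtype.dist_eq] at hn; linarith
  have hN : Measurable fun x => Nat.find (hex x) :=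
    measurable_find hex fun k => hA.measurableSet.union
      (isOpen_lt (continuous_id.dist continuous_const)
        (continuous_const.mul (continuous_infDist_pt A))).measurableSet
  refine ⟨A.piecewise id fun x => u (Nat.find (hex x)), ?_, fun x => ?_, fun x => ?_⟩
  · exact Measurable.piecewise hA.measurableSet measurable_id
      ((measurable_from_nat (f := fun n => (u n : X))).comp hN)
  · by_cases hx : x ∈ A <;> simp [hx]
  · by_cases hx : x ∈ A
    · simp [hx, infDist_nonneg]
    · simpa [hx] using ((Nat.find_spec (hex x)).resolve_left hx).le

theorem WbPow_ne_top (hA : IsClosed A) (hne : A.Nonempty) (hp : 0 ≤ p)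
    (h₀ : MemMp p A μ₀) (h₁ : MemMp p A μ₁) : WbPow p A μ₀ μ₁ ≠ ⊤ := by
  obtain ⟨f, hf, hfA, hfd⟩ := exists_measurable_dist_le_two_mul_infDist hA hne
  have hmoment : ∀ μ : Measure X, MemMp p A μ → ∫⁻ x, ENNReal.ofReal (dist x (f x) ^ p) ∂μ ≠ ⊤ :=
    fun μ hμ => by
      refine ne_top_of_le_ne_top (mul_ne_top (ofReal_ne_top (r := 2 ^ p)) hμ.2.2) ?_
      rw [← lintegral_const_mul' _ _ ofReal_ne_top]
      exact lintegral_mono fun x => ENNReal.ofReal_rpow_le_ofReal_rpow_mul dist_nonneg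
        infDist_nonneg zero_le_two hp (hfd x)
  refine ne_top_of_le_ne_top ?_
    (iInf₂_le _ (map_graph_add_map_graph_mem_ptAdm hf hfA hA.measurableSet h₀.1 h₁.1))
  rw [ptCost, lintegral_add_measure]
  refine ne_top_of_le_ne_top ?_ (add_le_add (lintegral_map_le _ _) (lintegral_map_le _ _))
  simp only [dist_comm (f _)]
  exact add_ne_top.2 ⟨hmoment μ₀ h₀, hmoment μ₁ h₁⟩

theorem measure_one_le_dist_le_ptCost (hp : 0 ≤ p) :
    γ {z | 1 ≤ dist z.1 z.2} ≤ ptCost p γ :=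
  calc γ {z | 1 ≤ dist z.1 z.2} ≤ 1 * γ {z | 1 ≤ ENNReal.ofReal (dist z.1 z.2 ^ p)} := by
        rw [one_mul]
        exact measure_mono fun z hz => one_le_ofReal.2 (Real.one_le_rpow hz hp)
    _ ≤ ptCost p γ := mul_meas_ge_le_lintegral (by fun_prop) 1

theorem isLocallyFiniteMeasure_map_restrict_compl [ProperSpace X] [IsLocallyFiniteMeasure μ₀]
    [IsLocallyFiniteMeasure μ₁] (hγ : γ ∈ ptAdm A μ₀ μ₁) (hA : MeasurableSet A) (hp : 0 ≤ p)
    (hcost : ptCost p γ ≠ ⊤) (hF : Measurable F) (hF₁ : ∀ z, dist (F z) z.1 ≤ dist z.1 z.2)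
    (hF₂ : ∀ z, dist (F z) z.2 ≤ dist z.1 z.2) :
    IsLocallyFiniteMeasure ((γ.map F).restrict Aᶜ) := by
  refine ⟨fun x => ⟨closedBall x 1, closedBall_mem_nhds x one_pos, ?_⟩⟩
  have hcover : F ⁻¹' closedBall x 1 ⊆ {z | 1 ≤ dist z.1 z.2} ∪
      Prod.fst ⁻¹' (closedBall x 2 ∩ Aᶜ) ∪ Prod.snd ⁻¹' (closedBall x 2 ∩ Aᶜ) ∪ A ×ˢ A := by
    intro z hz
    by_cases hd : 1 ≤ dist z.1 z.2
    · exact Or.inl (Or.inl (Or.inl hd))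
    have h₁ : dist z.1 x ≤ 2 := by
      linarith [dist_triangle_left z.1 x (F z), hF₁ z, mem_closedBall.1 hz]
    have h₂ : dist z.2 x ≤ 2 := by
      linarith [dist_triangle_left z.2 x (F z), hF₂ z, mem_closedBall.1 hz]
    by_cases h₁A : z.1 ∈ A
    · by_cases h₂A : z.2 ∈ A
      · exact Or.inr ⟨h₁A, h₂A⟩
      · exact Or.inl (Or.inr ⟨h₂, h₂A⟩)
    · exact Or.inl (Or.inl (Or.inr ⟨h₁, h₁A⟩))
  calc (γ.map F).restrict Aᶜ (closedBall x 1) ≤ γ.map F (closedBall x 1) :=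
        Measure.restrict_le_self _
    _ = γ (F ⁻¹' closedBall x 1) := Measure.map_apply hF measurableSet_closedBall
    _ ≤ γ {z | 1 ≤ dist z.1 z.2} + γ (Prod.fst ⁻¹' (closedBall x 2 ∩ Aᶜ)) +
          γ (Prod.snd ⁻¹' (closedBall x 2 ∩ Aᶜ)) + γ (A ×ˢ A) :=
        (measure_mono hcover).trans <| (measure_union_le _ _).trans <| add_le_add
          ((measure_union_le _ _).trans (add_le_add (measure_union_le _ _) le_rfl)) le_rfl
    _ = γ {z | 1 ≤ dist z.1 z.2} + μ₀ (closedBall x 2) + μ₁ (closedBall x 2) := by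
        rw [measure_fst_preimage_inter_compl_of_mem_ptAdm hγ hA measurableSet_closedBall,
          measure_snd_preimage_inter_compl_of_mem_ptAdm hγ hA measurableSet_closedBall, hγ.1,
          add_zero]
    _ < ⊤ := add_lt_top.2 ⟨add_lt_top.2 ⟨(measure_one_le_dist_le_ptCost hp).trans_lt
        hcost.lt_top, measure_closedBall_lt_top⟩, measure_closedBall_lt_top⟩

theorem memMp_map_restrict_compl [ProperSpace X] (h₀ : MemMp p A μ₀) (h₁ : MemMp p A μ₁)
    (hγ : γ ∈ ptAdm A μ₀ μ₁) (hA : MeasurableSet A) (hp : 1 ≤ p) (hcost : ptCost p γ ≠ ⊤)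
    (hF : Measurable F) (hF₁ : ∀ z, dist (F z) z.1 ≤ dist z.1 z.2)
    (hF₂ : ∀ z, dist (F z) z.2 ≤ dist z.1 z.2) :
    MemMp p A ((γ.map F).restrict Aᶜ) :=
  have := h₀.2.1
  have := h₁.2.1
  ⟨by simp [Measure.restrict_apply hA],
    isLocallyFiniteMeasure_map_restrict_compl hγ hA (by linarith) hcost hF hF₁ hF₂,
    lintegral_infDist_rpow_map_restrict_compl_ne_top hγ hp h₀.2.2 hcost hF₁⟩

end Metric

theorem measurable_eval_comp_of_measurable_borel {T X Y : Type*} [TopologicalSpace T]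
    [TopologicalSpace X] [MeasurableSpace X] [BorelSpace X] [MeasurableSpace Y]
    {G : Y → C(T, X)} (hG : @Measurable Y C(T, X) _ (borel _) G) (t : T) :
    Measurable fun y => G y t := by
  let := borel C(T, X)
  have : BorelSpace C(T, X) := ⟨rfl⟩
  exact (continuous_eval_const t).measurable.comp hG

theorem dist_le_of_forall_dist_eq_abs_sub_mul {X : Type*} [PseudoMetricSpace X]
    {ξ : unitInterval → X} {x y : X} (h0 : ξ 0 = x) (h1 : ξ 1 = y)
    (hξ : ∀ s t, dist (ξ s) (ξ t) = |(s : ℝ) - t| * dist x y) (t : unitInterval) :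
    dist (ξ t) x ≤ dist x y ∧ dist (ξ t) y ≤ dist x y := by
  have hle : ∀ s, dist (ξ t) (ξ s) ≤ dist x y := fun s =>
    (hξ t s).trans_le (mul_le_of_le_one_left dist_nonneg (abs_sub_le_iff.2
      ⟨by linarith [t.2.2, s.2.1], by linarith [t.2.1, s.2.2]⟩))
  exact ⟨by simpa only [h0] using hle 0, by simpa only [h1] using hle 1⟩

open unitInterval in
theorem displacement_interpolation_is_geodesic_general
    {X : Type*} [MetricSpace X] [TopologicalSpace.SeparableSpace X]
    [ProperSpace X] [MeasurableSpace X] [BorelSpace X]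
    (A : Set X) (hA : IsClosed A) (hne : A.Nonempty)
    (p : ℝ) (hp : 1 ≤ p)
    (μ₀ μ₁ : Measure X) (h₀ : MemMp p A μ₀) (h₁ : MemMp p A μ₁)
    (GeoSel : X × X → C(unitInterval, X))
    (hGmeas : @Measurable (X × X) C(unitInterval, X) _ (borel _) GeoSel)
    (hG0 : ∀ z : X × X, GeoSel z 0 = z.1) (hG1 : ∀ z : X × X, GeoSel z 1 = z.2)
    (hGspeed : ∀ z : X × X, ∀ s t : unitInterval,
      dist (GeoSel z s) (GeoSel z t) = |(s : ℝ) - (t : ℝ)| * dist z.1 z.2)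
    (γ : Measure (X × X)) (hγ : γ ∈ ptAdm A μ₀ μ₁)
    (hopt : ptCost p γ = WbPow p A μ₀ μ₁) :
    ((γ.map (fun z => GeoSel z 0)).restrict Aᶜ = μ₀) ∧
    ((γ.map (fun z => GeoSel z 1)).restrict Aᶜ = μ₁) ∧
    (∀ t : unitInterval, MemMp p A ((γ.map (fun z => GeoSel z t)).restrict Aᶜ)) ∧
    (∀ s t : unitInterval,
      Wb p A ((γ.map (fun z => GeoSel z s)).restrict Aᶜ)
        ((γ.map (fun z => GeoSel z t)).restrict Aᶜ) ≤
        ENNReal.ofReal |(s : ℝ) - (t : ℝ)| * Wb p A μ₀ μ₁) := by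
  have hp₀ : 0 < p := zero_lt_one.trans_le hp
  have heval := measurable_eval_comp_of_measurable_borel hGmeas
  have hcost : ptCost p γ ≠ ⊤ := hopt ▸ WbPow_ne_top hA hne hp₀.le h₀ h₁
  have hbetween := fun t z => dist_le_of_forall_dist_eq_abs_sub_mul (hG0 z) (hG1 z) (hGspeed z) t
  refine ⟨by simpa only [hG0] using hγ.2.1, by simpa only [hG1] using hγ.2.2, fun t => ?_,
    fun s t => ?_⟩
  · exact memMp_map_restrict_compl h₀ h₁ hγ hA.measurableSet hp hcost (heval t)
      (fun z => (hbetween t z).1) fun z => (hbetween t z).2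
  · refine Wb_le_ofReal_mul_of_WbPow_le (abs_nonneg _) hp₀ ?_
    calc WbPow p A _ _
        ≤ ptCost p ((γ.map fun z => (GeoSel z s, GeoSel z t)).restrict (A ×ˢ A)ᶜ) :=
          iInf₂_le _ (map_prod_restrict_mem_ptAdm γ (heval s) (heval t) hA.measurableSet)
      _ ≤ ENNReal.ofReal (|(s : ℝ) - t| ^ p) * ptCost p γ :=
          ptCost_map_prod_restrict_le _ (abs_nonneg _) hp₀.le fun z => (hGspeed z s t).le
      _ = ENNReal.ofReal (|(s : ℝ) - t| ^ p) * WbPow p A μ₀ μ₁ := by rw [hopt]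

open unitInterval in
theorem displacement_interpolation_is_geodesic
    {X : Type*} [MetricSpace X] [CompleteSpace X] [TopologicalSpace.SeparableSpace X]
    [ProperSpace X] [MeasurableSpace X] [BorelSpace X]
    (A : Set X) (hA : IsClosed A) (hne : A.Nonempty)
    (p : ℝ) (hp : 1 ≤ p)
    (hgeodesic : ∀ x y : X, ∃ ξ : C(unitInterval, X), ξ 0 = x ∧ ξ 1 = y ∧
      ∀ s t : unitInterval, dist (ξ s) (ξ t) = |(s : ℝ) - (t : ℝ)| * dist x y)
    (μ₀ μ₁ : Measure X) (h₀ : MemMp p A μ₀) (h₁ : MemMp p A μ₁)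
    (GeoSel : X × X → C(unitInterval, X))
    (hGmeas : @Measurable (X × X) C(unitInterval, X) _ (borel _) GeoSel)
    (hG0 : ∀ z : X × X, GeoSel z 0 = z.1) (hG1 : ∀ z : X × X, GeoSel z 1 = z.2)
    (hGspeed : ∀ z : X × X, ∀ s t : unitInterval,
      dist (GeoSel z s) (GeoSel z t) = |(s : ℝ) - (t : ℝ)| * dist z.1 z.2)
    (γ : Measure (X × X)) (hγ : γ ∈ ptAdm A μ₀ μ₁)
    (hopt : ptCost p γ = WbPow p A μ₀ μ₁) :
    ((γ.map (fun z => GeoSel z 0)).restrict Aᶜ = μ₀) ∧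
    ((γ.map (fun z => GeoSel z 1)).restrict Aᶜ = μ₁) ∧
    (∀ t : unitInterval, MemMp p A ((γ.map (fun z => GeoSel z t)).restrict Aᶜ)) ∧
    (∀ s t : unitInterval,
      Wb p A ((γ.map (fun z => GeoSel z s)).restrict Aᶜ)
        ((γ.map (fun z => GeoSel z t)).restrict Aᶜ) ≤
        ENNReal.ofReal |(s : ℝ) - (t : ℝ)| * Wb p A μ₀ μ₁) :=
  displacement_interpolation_is_geodesic_general A hA hne p hp μ₀ μ₁ h₀ h₁ GeoSel hGmeas hG0 hG1
    hGspeed γ hγ hopt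
end

section
/- Let (X,A) be a metric pair with X complete separable proper, p ∈ [1,∞), and μ ∈ M_p(X,A). For r > 0 let A_r = {x ∈ X : dist(x,A) ≤ r} and μ^r = μ restricted to X \ A_r. Then Wb_p(μ^r, μ)^p ≤ ∫_{A_r ∩ Ω} dist(x,A)^p dμ(x), and hence Wb_p(μ^r, μ) → 0 as r → 0. -/
open MeasureTheory Metric Set ENNReal Filter

/-!
Mass of `μ` within distance `r` of `A` is sent to a nearby point of `A`, and the rest stays in place.
A nearest point would cost exactly `∫_{A_r} d(x,A)^p dμ`, but choosing it measurably needs a selection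
theorem; instead, for `c > 1`, picking the first point of a countable dense subset of `A` within
`c · d(x,A)` of `x` is measurable and costs at most `c^p` times as much, and we let `c → 1`.
The bound tends to `0` because the sets `A_r \ A` decrease to `∅` as `r ↓ 0` (here `A` is closed),
and `d(·,A)^p μ` is a finite measure.
-/

open Topology

section ApproxProjection

variable {X : Type*} [PseudoMetricSpace X] [TopologicalSpace.SeparableSpace X]
  [MeasurableSpace X] [BorelSpace X]

lemma IsClosed.exists_measurable_approx_proj {A : Set X} (hA : IsClosed A) (hne : A.Nonempty)
    {c : ℝ} (hc : 1 < c) :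
    ∃ f : X → X, Measurable f ∧ (∀ x, f x ∈ A) ∧ ∀ x ∉ A, dist x (f x) ≤ c * infDist x A := by
  classical
  obtain ⟨t, htA, htc, htd⟩ :=
    (TopologicalSpace.IsSeparable.of_separableSpace A).exists_countable_dense_subset
  obtain ⟨a, rfl⟩ := htc.exists_eq_range (closure_nonempty_iff.1 (hne.mono htd))
  let P : X → ℕ → Prop := fun x n => x ∈ A ∨ dist x (a n) ≤ c * infDist x A
  have hP : ∀ x, ∃ n, P x n := by
    intro x
    by_cases hx : x ∈ A
    · exact ⟨0, Or.inl hx⟩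
    have hpos : 0 < infDist x A := (hA.notMem_iff_infDist_pos hne).1 hx
    obtain ⟨y, hyA, hy⟩ := (infDist_lt_iff hne).1 (lt_mul_left hpos hc)
    obtain ⟨_, ⟨n, rfl⟩, hn⟩ := Metric.mem_closure_iff.1 (htd hyA) _ (sub_pos.2 hy)
    exact ⟨n, Or.inr (by linarith [dist_triangle x y (a n)])⟩
  have hPm : ∀ n, MeasurableSet {x | P x n} := fun n =>
    hA.measurableSet.union (measurableSet_le (measurable_id.dist measurable_const)
      (measurable_const.mul (continuous_infDist_pt A).measurable))
  exact ⟨fun x => a (Nat.find (hP x)), measurable_from_nat.comp (measurable_find hP hPm),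
    fun x => htA (mem_range_self _), fun x hx => (Nat.find_spec (hP x)).resolve_left hx⟩

end ApproxProjection

section TruncationPlan

variable {X : Type*} [MeasurableSpace X] {μ : Measure X} {A S : Set X} {f : X → X}

noncomputable def truncationPlan (μ : Measure X) (S : Set X) (f : X → X) : Measure (X × X) :=
  (μ.restrict S).map (fun x => (x, x)) + (μ.restrict Sᶜ).map (fun x => (f x, x))

lemma truncationPlan_mem_ptAdm (hA : MeasurableSet A) (hμA : μ A = 0) (hS : MeasurableSet S)
    (hf : Measurable f) (hfA : ∀ x, f x ∈ A) :
    truncationPlan μ S f ∈ ptAdm A (μ.restrict S) μ := by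
  have hdiag : Measurable fun x : X => (x, x) := measurable_id.prodMk measurable_id
  have hgraph : Measurable fun x : X => (f x, x) := hf.prodMk measurable_id
  have hAc : ∀ᵐ x ∂μ, x ∈ Aᶜ := compl_mem_ae_iff.2 hμA
  refine ⟨?_, ?_, ?_⟩
  · rw [truncationPlan, Measure.add_apply, Measure.map_apply hdiag (hA.prod hA),
      Measure.map_apply hgraph (hA.prod hA)]
    have hnull : ∀ T, μ.restrict T A = 0 := fun T =>
      nonpos_iff_eq_zero.1 ((Measure.restrict_apply_le T A).trans hμA.le)
    exact add_eq_zero.2 ⟨measure_mono_null (fun x hx => hx.2) (hnull S),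
      measure_mono_null (fun x hx => hx.2) (hnull Sᶜ)⟩
  · rw [truncationPlan, Measure.map_add _ _ measurable_fst, Measure.restrict_add,
      Measure.map_map measurable_fst hdiag, Measure.map_map measurable_fst hgraph]
    have hfAc : ((μ.restrict Sᶜ).map f).restrict Aᶜ = 0 := by
      rw [Measure.restrict_eq_zero, Measure.map_apply hf hA.compl]
      simp [preimage, hfA]
    rw [Function.comp_def, Function.comp_def, hfAc, add_zero, Measure.map_id',
      Measure.restrict_eq_self_of_ae_mem (ae_restrict_of_ae hAc)]
  · rw [truncationPlan, Measure.map_add _ _ measurable_snd, Measure.map_map measurable_snd hdiag,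
      Measure.map_map measurable_snd hgraph, Function.comp_def, Function.comp_def,
      Measure.map_id', Measure.map_id', Measure.restrict_add_restrict_compl hS,
      Measure.restrict_eq_self_of_ae_mem hAc]

lemma ptCost_truncationPlan [PseudoMetricSpace X] [SecondCountableTopology X] [BorelSpace X]
    {p : ℝ} (hp : 0 < p) (hf : Measurable f) :
    ptCost p (truncationPlan μ S f) = ∫⁻ x in Sᶜ, ENNReal.ofReal (dist (f x) x ^ p) ∂μ := by
  have hcost : Measurable fun z : X × X => ENNReal.ofReal (dist z.1 z.2 ^ p) :=
    ((measurable_fst.dist measurable_snd).pow_const p).ennreal_ofReal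
  rw [ptCost, truncationPlan, lintegral_add_measure,
    lintegral_map hcost (by fun_prop : Measurable fun x : X => (x, x)),
    lintegral_map hcost (by fun_prop : Measurable fun x : X => (f x, x))]
  simp [Real.zero_rpow hp.ne']

end TruncationPlan

section Truncation

variable {X : Type*} [PseudoMetricSpace X] [MeasurableSpace X] [BorelSpace X]
  {A : Set X} {μ : Measure X}

lemma measurableSet_infDist_le_inter_compl (hA : MeasurableSet A) (r : ℝ) :
    MeasurableSet ({x | infDist x A ≤ r} ∩ Aᶜ) :=
  (measurableSet_le (continuous_infDist_pt A).measurable measurable_const).inter hA.compl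

lemma wbPow_restrict_infDist_lt_le_mul [TopologicalSpace.SeparableSpace X] (hA : IsClosed A)
    (hne : A.Nonempty) {p : ℝ} (hp : 0 < p) (hμA : μ A = 0) (r : ℝ) {c : ℝ} (hc : 1 < c) :
    WbPow p A (μ.restrict {x | r < infDist x A}) μ ≤ ENNReal.ofReal (c ^ p) *
      ∫⁻ x in {x | infDist x A ≤ r} ∩ Aᶜ, ENNReal.ofReal (infDist x A ^ p) ∂μ := by
  have := UniformSpace.secondCountable_of_separable X
  obtain ⟨f, hf, hfA, hfd⟩ := hA.exists_measurable_approx_proj hne hc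
  have hS : MeasurableSet {x | r < infDist x A} :=
    measurableSet_lt measurable_const (continuous_infDist_pt A).measurable
  have hrestrict : μ.restrict ({x | infDist x A ≤ r} ∩ Aᶜ) = μ.restrict {x | r < infDist x A}ᶜ := by
    rw [← Measure.restrict_restrict (measurableSet_le (continuous_infDist_pt A).measurable
      measurable_const), Measure.restrict_eq_self_of_ae_mem (s := Aᶜ)
      (compl_mem_ae_iff.2 hμA)]
    congr 1
    ext x
    simp
  calc WbPow p A (μ.restrict {x | r < infDist x A}) μ
      ≤ ptCost p (truncationPlan μ {x | r < infDist x A} f) :=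
        iInf₂_le _ (truncationPlan_mem_ptAdm hA.measurableSet hμA hS hf hfA)
    _ = ∫⁻ x in {x | infDist x A ≤ r} ∩ Aᶜ, ENNReal.ofReal (dist (f x) x ^ p) ∂μ := by
        rw [ptCost_truncationPlan hp hf, hrestrict]
    _ ≤ ∫⁻ x in {x | infDist x A ≤ r} ∩ Aᶜ,
          ENNReal.ofReal (c ^ p) * ENNReal.ofReal (infDist x A ^ p) ∂μ := by
        refine setLIntegral_mono' (measurableSet_infDist_le_inter_compl hA.measurableSet r) fun x hx => ?_
        rw [← ENNReal.ofReal_mul (by positivity), ← Real.mul_rpow (by positivity) infDist_nonneg]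
        exact ENNReal.ofReal_le_ofReal (Real.rpow_le_rpow dist_nonneg
          (dist_comm x (f x) ▸ hfd x hx.2) hp.le)
    _ = _ := lintegral_const_mul' _ _ ENNReal.ofReal_ne_top

lemma wbPow_restrict_infDist_lt_le [TopologicalSpace.SeparableSpace X] (hA : IsClosed A)
    (hne : A.Nonempty) {p : ℝ} (hp : 0 < p) (hμA : μ A = 0) (r : ℝ) :
    WbPow p A (μ.restrict {x | r < infDist x A}) μ ≤
      ∫⁻ x in {x | infDist x A ≤ r} ∩ Aᶜ, ENNReal.ofReal (infDist x A ^ p) ∂μ := by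
  have hfactor : Tendsto (fun c : ℝ => ENNReal.ofReal (c ^ p)) (𝓝[>] 1) (𝓝 1) := by
    have := (ENNReal.continuous_ofReal.tendsto _).comp
      (Real.continuousAt_rpow_const 1 p (Or.inl one_ne_zero)).tendsto
    simpa [Function.comp_def] using this.mono_left nhdsWithin_le_nhds
  refine ge_of_tendsto (by simpa using ENNReal.Tendsto.mul_const hfactor (Or.inl one_ne_zero))
    (eventually_nhdsWithin_of_forall fun c hc => ?_)
  exact wbPow_restrict_infDist_lt_le_mul hA hne hp hμA r hc

lemma tendsto_measure_infDist_le_inter_compl [IsFiniteMeasure μ] (hA : IsClosed A)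
    (hne : A.Nonempty) :
    Tendsto (fun r => μ ({x | infDist x A ≤ r} ∩ Aᶜ)) (𝓝[>] 0) (𝓝 0) := by
  have hempty : ⋂ r > (0 : ℝ), {x | infDist x A ≤ r} ∩ Aᶜ = ∅ := by
    refine eq_empty_iff_forall_notMem.2 fun x hx => ?_
    simp only [mem_iInter] at hx
    have hpos : 0 < infDist x A := (hA.notMem_iff_infDist_pos hne).1 (hx 1 one_pos).2
    exact (hx _ (half_pos hpos)).1.not_gt (half_lt_self hpos)
  have := tendsto_measure_biInter_gt (μ := μ) (a := (0 : ℝ))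
    (fun r _ => (measurableSet_infDist_le_inter_compl hA.measurableSet r).nullMeasurableSet)
    (fun i j _ hij => inter_subset_inter_left _ fun x hx => le_trans hx hij)
    ⟨1, one_pos, measure_ne_top _ _⟩
  rwa [hempty, measure_empty] at this

lemma tendsto_setLIntegral_infDist_le_inter_compl (hA : IsClosed A) (hne : A.Nonempty)
    {g : X → ℝ≥0∞} (hg : ∫⁻ x, g x ∂μ ≠ ∞) :
    Tendsto (fun r => ∫⁻ x in {x | infDist x A ≤ r} ∩ Aᶜ, g x ∂μ) (𝓝[>] 0) (𝓝 0) := by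
  have := isFiniteMeasure_withDensity hg
  exact (tendsto_measure_infDist_le_inter_compl (μ := μ.withDensity g) hA hne).congr fun r =>
    withDensity_apply _ (measurableSet_infDist_le_inter_compl hA.measurableSet r)

end Truncation

theorem truncation_converges_in_wb_general
    {X : Type*} [MetricSpace X] [TopologicalSpace.SeparableSpace X]
    [MeasurableSpace X] [BorelSpace X]
    (A : Set X) (hA : IsClosed A) (hne : A.Nonempty)
    (p : ℝ) (hp : 1 ≤ p)
    (μ : Measure X) (hμ : MemMp p A μ) :
    (∀ r : ℝ, 0 < r →
      WbPow p A (μ.restrict {x | r < infDist x A}) μ ≤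
        ∫⁻ x in {x | infDist x A ≤ r} ∩ Aᶜ, ENNReal.ofReal (infDist x A ^ p) ∂μ) ∧
    Tendsto (fun r : ℝ => Wb p A (μ.restrict {x | r < infDist x A}) μ)
      (nhdsWithin 0 (Set.Ioi 0)) (nhds 0) := by
  have hp0 : 0 < p := zero_lt_one.trans_le hp
  have hbound := wbPow_restrict_infDist_lt_le hA hne hp0 hμ.1
  refine ⟨fun r _ => hbound r, ?_⟩
  have hroot := (ENNReal.continuous_rpow_const (y := 1 / p)).tendsto 0 |>.comp
    (tendsto_setLIntegral_infDist_le_inter_compl hA hne hμ.2.2)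
  rw [ENNReal.zero_rpow_of_pos (one_div_pos.2 hp0)] at hroot
  exact tendsto_of_tendsto_of_tendsto_of_le_of_le tendsto_const_nhds hroot (fun _ => bot_le)
    fun r => ENNReal.rpow_le_rpow (hbound r) (one_div_pos.2 hp0).le

theorem truncation_converges_in_wb
    {X : Type*} [MetricSpace X] [CompleteSpace X] [TopologicalSpace.SeparableSpace X]
    [ProperSpace X] [MeasurableSpace X] [BorelSpace X]
    (A : Set X) (hA : IsClosed A) (hne : A.Nonempty)
    (p : ℝ) (hp : 1 ≤ p)
    (μ : Measure X) (hμ : MemMp p A μ) :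
    (∀ r : ℝ, 0 < r →
      WbPow p A (μ.restrict {x | r < infDist x A}) μ ≤
        ∫⁻ x in {x | infDist x A ≤ r} ∩ Aᶜ, ENNReal.ofReal (infDist x A ^ p) ∂μ) ∧
    Tendsto (fun r : ℝ => Wb p A (μ.restrict {x | r < infDist x A}) μ)
      (nhdsWithin 0 (Set.Ioi 0)) (nhds 0) :=
  truncation_converges_in_wb_general A hA hne p hp μ hμ
end
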